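/- arXiv:2410.02336 — 12 statements merged into one kernel-verified Lean document; each statement's English description precedes it below -/
import Mathlib

section
/- For every finite tree T (a connected acyclic simple graph on a nonempty finite vertex set), the strong odd chromatic number satisfies χ_so(T) ≤ 3. -/
/-- A strong odd coloring of a simple graph: a proper vertex coloring such that for every
vertex `v` and every color `c`, the number of neighbors of `v` colored `c` is zero or odd. -/
def SimpleGraph.IsStrongOddColoring {V α : Type*} (G : SimpleGraph V) (φ : V → α) : Prop :=
  (∀ ⦃u v⦄, G.Adj u v → φ u ≠ φ v) ∧
    ∀ v c, Nat.card {u // G.Adj v u ∧ φ u = c} = 0 ∨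
      Odd (Nat.card {u // G.Adj v u ∧ φ u = c})

/-- The strong odd chromatic number: the least `k` such that there is a strong odd
coloring using `k` colors. -/
noncomputable def SimpleGraph.strongOddChromaticNumber {V : Type*} (G : SimpleGraph V) : ℕ :=
  sInf {k | ∃ φ : V → Fin k, G.IsStrongOddColoring φ}


namespace StrongOddAux

open SimpleGraph Finset

variable {V : Type*} [Fintype V] [DecidableEq V] (T : SimpleGraph V) (hT : T.IsTree) (r : V)

/-- The unique path from `v` to the root `r`. -/
noncomputable def P (v : V) : T.Walk v r := (hT.existsUnique_path v r).choose

lemma P_isPath (v : V) : (P T hT r v).IsPath := (hT.existsUnique_path v r).choose_spec.1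

lemma P_unique {v : V} (q : T.Walk v r) (hq : q.IsPath) : q = P T hT r v :=
  (hT.existsUnique_path v r).choose_spec.2 q hq

/-- Depth of a vertex. -/
noncomputable def depth (v : V) : ℕ := (P T hT r v).length

/-- Parent of a vertex. -/
noncomputable def parent (v : V) : V := (P T hT r v).getVert 1

lemma P_r : P T hT r r = SimpleGraph.Walk.nil :=
  (P_unique T hT r SimpleGraph.Walk.nil SimpleGraph.Walk.IsPath.nil).symm

lemma depth_r : depth T hT r r = 0 := by
  rw [depth, P_r]; rfl

lemma eq_r_of_depth_eq_zero {v : V} (h : depth T hT r v = 0) : v = r :=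
  SimpleGraph.Walk.eq_of_length_eq_zero h

lemma parent_spec {v : V} (hv : v ≠ r) :
    ∃ h : T.Adj v (parent T hT r v),
      P T hT r v = SimpleGraph.Walk.cons h (P T hT r (parent T hT r v)) := by
  have hpath := P_isPath T hT r v
  rcases hq : P T hT r v with _ | ⟨h, q⟩
  · exact absurd rfl hv
  · rename_i w
    have hw : parent T hT r v = w := by
      rw [parent, hq, SimpleGraph.Walk.getVert_cons_succ, SimpleGraph.Walk.getVert_zero]
    have hqp : q.IsPath := by
      rw [hq] at hpath
      exact hpath.of_cons
    subst hw
    exact ⟨h, by rw [P_unique T hT r q hqp]⟩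

lemma adj_parent {v : V} (hv : v ≠ r) : T.Adj v (parent T hT r v) :=
  (parent_spec T hT r hv).choose

lemma depth_parent {v : V} (hv : v ≠ r) :
    depth T hT r v = depth T hT r (parent T hT r v) + 1 := by
  obtain ⟨h, hP⟩ := parent_spec T hT r hv
  rw [depth, depth, hP, SimpleGraph.Walk.length_cons]

lemma step {u v : V} (h : T.Adj u v) (hd : depth T hT r u ≤ depth T hT r v) :
    v ≠ r ∧ parent T hT r v = u ∧ depth T hT r v = depth T hT r u + 1 := by
  have hv : v ≠ r := by
    intro hvr
    have hv0 : depth T hT r v = 0 := by rw [hvr, depth_r]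
    have hu0 : depth T hT r u = 0 := by omega
    have hur := eq_r_of_depth_eq_zero T hT r hu0
    rw [hur, hvr] at h
    exact T.irrefl h
  -- show `v` is not in the path from `u` to `r`
  have hnot : v ∉ (P T hT r u).support := by
    intro hmem
    have htake : ((P T hT r u).takeUntil v hmem).IsPath :=
      (P_isPath T hT r u).takeUntil hmem
    have hsingle : ((P T hT r u).takeUntil v hmem) = (SimpleGraph.Path.singleton h).1 := by
      have := hT.IsAcyclic.path_unique ⟨(P T hT r u).takeUntil v hmem, htake⟩
        (SimpleGraph.Path.singleton h)
      exact congrArg Subtype.val this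
    have hdrop : ((P T hT r u).dropUntil v hmem).IsPath :=
      (P_isPath T hT r u).dropUntil hmem
    have hdropP : (P T hT r u).dropUntil v hmem = P T hT r v :=
      P_unique T hT r _ hdrop
    have hspec := (P T hT r u).take_spec hmem
    have hlen := congrArg SimpleGraph.Walk.length hspec
    rw [SimpleGraph.Walk.length_append, hsingle, hdropP] at hlen
    have : 1 + depth T hT r v = depth T hT r u := hlen
    omega
  have hcons : (SimpleGraph.Walk.cons h.symm (P T hT r u)).IsPath :=
    (P_isPath T hT r u).cons hnot
  have hPv : SimpleGraph.Walk.cons h.symm (P T hT r u) = P T hT r v :=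
    P_unique T hT r _ hcons
  refine ⟨hv, ?_, ?_⟩
  · rw [parent, ← hPv, SimpleGraph.Walk.getVert_cons_succ, SimpleGraph.Walk.getVert_zero]
  · rw [depth, ← hPv, SimpleGraph.Walk.length_cons]; rfl

lemma adj_cases {u v : V} (h : T.Adj u v) :
    (v ≠ r ∧ parent T hT r v = u ∧ depth T hT r v = depth T hT r u + 1) ∨
      (u ≠ r ∧ parent T hT r u = v ∧ depth T hT r u = depth T hT r v + 1) := by
  rcases le_total (depth T hT r u) (depth T hT r v) with hd | hd
  · exact Or.inl (step T hT r h hd)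
  · exact Or.inr (step T hT r h.symm hd)

/-- The children of a vertex. -/
noncomputable def childs (v : V) : Finset V :=
  Finset.univ.filter (fun u => u ≠ r ∧ parent T hT r u = v)

lemma mem_childs {v u : V} : u ∈ childs T hT r v ↔ u ≠ r ∧ parent T hT r u = v := by
  simp [childs]

lemma childs_adj {v u : V} (hu : u ∈ childs T hT r v) : T.Adj v u := by
  rw [mem_childs] at hu
  have := adj_parent T hT r hu.1
  rw [hu.2] at this
  exact this.symm

lemma adj_root_iff {u : V} : T.Adj r u ↔ u ∈ childs T hT r r := by
  constructor
  · intro h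
    rcases adj_cases T hT r h with ⟨hur, hp, _⟩ | ⟨hr, _, _⟩
    · exact (mem_childs T hT r).mpr ⟨hur, hp⟩
    · exact absurd rfl hr
  · exact childs_adj T hT r

lemma adj_iff {v u : V} (hv : v ≠ r) :
    T.Adj v u ↔ u ∈ childs T hT r v ∨ u = parent T hT r v := by
  constructor
  · intro h
    rcases adj_cases T hT r h with ⟨hur, hp, _⟩ | ⟨_, hp, _⟩
    · exact Or.inl ((mem_childs T hT r).mpr ⟨hur, hp⟩)
    · exact Or.inr hp.symm
  · rintro (hu | rfl)
    · exact childs_adj T hT r hu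
    · exact adj_parent T hT r hv

lemma parent_notMem_childs {v : V} (hv : v ≠ r) :
    parent T hT r v ∉ childs T hT r v := by
  intro hmem
  rw [mem_childs] at hmem
  have h1 := depth_parent T hT r hv
  have h2 := depth_parent T hT r hmem.1
  rw [hmem.2] at h2
  omega

/-- A choice of a distinguished element in a finset. -/
noncomputable def fst (s : Finset V) : V :=
  if h : s.Nonempty then h.choose else r

lemma fst_mem {s : Finset V} (h : s.Nonempty) : fst r s ∈ s := by
  rw [fst, dif_pos h]
  exact h.choose_spec

/-- The strong odd coloring. -/
noncomputable def col (v : V) : Fin 3 :=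
  if hv : v = r then 0
  else if hp : parent T hT r v = r then
    (if Odd (childs T hT r r).card then 1
      else if v = fst r (childs T hT r r) then 1 else 2)
  else
    (if Even (childs T hT r (parent T hT r v)).card then
        col (parent T hT r (parent T hT r v))
      else if v = fst r (childs T hT r (parent T hT r v)) then
        -(col (parent T hT r v) + col (parent T hT r (parent T hT r v)))
      else col (parent T hT r (parent T hT r v)))
termination_by depth T hT r v
decreasing_by
  all_goals
    have h1 := depth_parent T hT r hv
    have h2 := depth_parent T hT r hp
    omega

lemma col_r : col T hT r r = 0 := by rw [col]; simp

lemma col_child_root {u : V} (hu : u ∈ childs T hT r r) :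
    col T hT r u =
      (if Odd (childs T hT r r).card then 1
        else if u = fst r (childs T hT r r) then 1 else 2) := by
  rw [mem_childs] at hu
  rw [col, dif_neg hu.1, dif_pos hu.2]

lemma col_child_nonroot {v u : V} (hv : v ≠ r) (hu : u ∈ childs T hT r v) :
    col T hT r u =
      (if Even (childs T hT r v).card then col T hT r (parent T hT r v)
        else if u = fst r (childs T hT r v) then
          -(col T hT r v + col T hT r (parent T hT r v))
        else col T hT r (parent T hT r v)) := by
  rw [mem_childs] at hu
  rw [col, dif_neg hu.1]
  rw [dif_neg (by rw [hu.2]; exact hv)]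
  simp_rw [hu.2]

lemma fin3_key : ∀ a b : Fin 3, a ≠ b → -(a + b) ≠ a ∧ -(a + b) ≠ b := by decide

lemma col_ne_parent : ∀ v : V, v ≠ r → col T hT r v ≠ col T hT r (parent T hT r v) := by
  suffices H : ∀ n (v : V), depth T hT r v ≤ n → v ≠ r →
      col T hT r v ≠ col T hT r (parent T hT r v) by
    exact fun v hv => H (depth T hT r v) v le_rfl hv
  intro n
  induction n with
  | zero =>
    intro v hd hv
    exact absurd (eq_r_of_depth_eq_zero T hT r (Nat.le_zero.mp hd)) hv
  | succ n ih =>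
    intro v hd hv
    by_cases hp : parent T hT r v = r
    · have hc : v ∈ childs T hT r r := (mem_childs T hT r).mpr ⟨hv, hp⟩
      rw [col_child_root T hT r hc, hp, col_r]
      split_ifs <;> decide
    · have hc : v ∈ childs T hT r (parent T hT r v) := (mem_childs T hT r).mpr ⟨hv, rfl⟩
      have hdp : depth T hT r (parent T hT r v) ≤ n := by
        have := depth_parent T hT r hv; omega
      have hab := ih (parent T hT r v) hdp hp
      rw [col_child_nonroot T hT r hp hc]
      split_ifs with h1 h2
      · exact Ne.symm hab
      · exact (fin3_key _ _ hab).1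
      · exact Ne.symm hab

lemma col_proper : ∀ ⦃u v : V⦄, T.Adj u v → col T hT r u ≠ col T hT r v := by
  intro u v h
  rcases adj_cases T hT r h with ⟨hvr, hp, _⟩ | ⟨hur, hp, _⟩
  · have := col_ne_parent T hT r v hvr
    rw [hp] at this
    exact this.symm
  · have := col_ne_parent T hT r u hur
    rw [hp] at this
    exact this

lemma col_counts (v : V) (c : Fin 3) :
    Nat.card {u // T.Adj v u ∧ col T hT r u = c} = 0 ∨
      Odd (Nat.card {u // T.Adj v u ∧ col T hT r u = c}) := by
  classical
  have hcard : Nat.card {u // T.Adj v u ∧ col T hT r u = c} =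
      (Finset.univ.filter (fun u => T.Adj v u ∧ col T hT r u = c)).card := by
    rw [Nat.card_eq_fintype_card, Fintype.card_subtype]
  rw [hcard]
  by_cases hv : v = r
  · -- root case
    rw [hv]
    have hS : Finset.univ.filter (fun u => T.Adj r u ∧ col T hT r u = c) =
        (childs T hT r r).filter (fun u => col T hT r u = c) := by
      ext u
      simp only [Finset.mem_filter, Finset.mem_univ, true_and]
      rw [adj_root_iff T hT r]
    rw [hS]
    by_cases hodd : Odd (childs T hT r r).card
    · -- all children get color 1
      have hcol : ∀ u ∈ childs T hT r r, col T hT r u = 1 := by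
        intro u hu
        rw [col_child_root T hT r hu, if_pos hodd]
      by_cases hc : c = 1
      · subst hc
        rw [Finset.filter_true_of_mem hcol]
        exact Or.inr hodd
      · rw [Finset.filter_false_of_mem (fun u hu => by rw [hcol u hu]; exact fun h => hc h.symm)]
        exact Or.inl rfl
    · -- even number of children
      by_cases hn : (childs T hT r r).card = 0
      · left
        rw [Finset.card_eq_zero] at hn
        rw [hn]
        simp
      · have hne : (childs T hT r r).Nonempty := Finset.card_pos.mp (Nat.pos_of_ne_zero hn)
        have hfm : fst r (childs T hT r r) ∈ childs T hT r r := fst_mem r hne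
        have hcol : ∀ u ∈ childs T hT r r,
            col T hT r u = if u = fst r (childs T hT r r) then 1 else 2 := by
          intro u hu
          rw [col_child_root T hT r hu, if_neg hodd]
        by_cases hc1 : c = 1
        · subst hc1
          right
          have : (childs T hT r r).filter (fun u => col T hT r u = 1) =
              {fst r (childs T hT r r)} := by
            ext u
            simp only [Finset.mem_filter, Finset.mem_singleton]
            constructor
            · rintro ⟨hu, hcu⟩
              rw [hcol u hu] at hcu
              by_contra hne'
              rw [if_neg hne'] at hcu
              exact absurd hcu (by decide)
            · rintro rfl
              exact ⟨hfm, by rw [hcol _ hfm, if_pos rfl]⟩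
          rw [this, Finset.card_singleton]
          exact odd_one
        · by_cases hc2 : c = 2
          · subst hc2
            right
            have : (childs T hT r r).filter (fun u => col T hT r u = 2) =
                (childs T hT r r).erase (fst r (childs T hT r r)) := by
              ext u
              simp only [Finset.mem_filter, Finset.mem_erase]
              constructor
              · rintro ⟨hu, hcu⟩
                rw [hcol u hu] at hcu
                refine ⟨?_, hu⟩
                intro heq
                rw [if_pos heq] at hcu
                exact absurd hcu (by decide)
              · rintro ⟨hne', hu⟩
                exact ⟨hu, by rw [hcol u hu, if_neg hne']⟩
            rw [this, Finset.card_erase_of_mem hfm]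
            rw [Nat.odd_sub (Nat.pos_of_ne_zero hn)]
            simpa [Nat.not_odd_iff_even] using hodd
          · left
            rw [Finset.card_eq_zero, Finset.filter_eq_empty_iff]
            intro u hu
            rw [hcol u hu]
            split_ifs <;> [exact fun h => hc1 h.symm; exact fun h => hc2 h.symm]
  · -- non-root case
    have hsplit : Finset.univ.filter (fun u => T.Adj v u ∧ col T hT r u = c) =
        ((childs T hT r v).filter (fun u => col T hT r u = c)) ∪
          (({parent T hT r v} : Finset V).filter (fun u => col T hT r u = c)) := by
      ext u
      simp only [Finset.mem_filter, Finset.mem_univ, true_and, Finset.mem_union,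
        Finset.mem_singleton]
      rw [adj_iff T hT r hv]
      tauto
    have hdisj : Disjoint ((childs T hT r v).filter (fun u => col T hT r u = c))
        (({parent T hT r v} : Finset V).filter (fun u => col T hT r u = c)) := by
      rw [Finset.disjoint_left]
      intro u hu hu'
      simp only [Finset.mem_filter, Finset.mem_singleton] at hu hu'
      rw [hu'.1] at hu
      exact parent_notMem_childs T hT r hv hu.1
    rw [hsplit, Finset.card_union_of_disjoint hdisj]
    set a := col T hT r v with ha
    set b := col T hT r (parent T hT r v) with hb
    have hab : a ≠ b := col_ne_parent T hT r v hv
    have hpcard : (({parent T hT r v} : Finset V).filter (fun u => col T hT r u = c)).card =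
        if b = c then 1 else 0 := by
      rw [Finset.filter_singleton]
      by_cases hbc : b = c
      · rw [if_pos hbc, if_pos hbc, Finset.card_singleton]
      · rw [if_neg hbc, if_neg hbc, Finset.card_empty]
    rw [hpcard]
    by_cases heven : Even (childs T hT r v).card
    · -- all children get color b
      have hcol : ∀ u ∈ childs T hT r v, col T hT r u = b := by
        intro u hu
        rw [col_child_nonroot T hT r hv hu, if_pos heven]
      by_cases hbc : b = c
      · subst hbc
        right
        rw [Finset.filter_true_of_mem hcol, if_pos rfl]
        rcases heven with ⟨k, hk⟩
        exact ⟨k, by omega⟩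
      · left
        rw [Finset.filter_false_of_mem (fun u hu => by rw [hcol u hu]; exact hbc), if_neg hbc]
        simp
    · -- odd number of children
      have hn : (childs T hT r v).card ≠ 0 := by
        intro h
        rw [h] at heven
        exact heven (Even.zero)
      have hne : (childs T hT r v).Nonempty := Finset.card_pos.mp (Nat.pos_of_ne_zero hn)
      have hfm : fst r (childs T hT r v) ∈ childs T hT r v := fst_mem r hne
      have hcol : ∀ u ∈ childs T hT r v,
          col T hT r u = if u = fst r (childs T hT r v) then -(a + b) else b := by
        intro u hu
        rw [col_child_nonroot T hT r hv hu, if_neg heven]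
      have htb : -(a + b) ≠ b := (fin3_key a b hab).2
      by_cases hbc : b = c
      · -- count for color b : (n-1) children + parent
        subst hbc
        right
        have : (childs T hT r v).filter (fun u => col T hT r u = b) =
            (childs T hT r v).erase (fst r (childs T hT r v)) := by
          ext u
          simp only [Finset.mem_filter, Finset.mem_erase]
          constructor
          · rintro ⟨hu, hcu⟩
            rw [hcol u hu] at hcu
            refine ⟨?_, hu⟩
            intro heq
            rw [if_pos heq] at hcu
            exact htb hcu
          · rintro ⟨hne', hu⟩
            exact ⟨hu, by rw [hcol u hu, if_neg hne']⟩
        rw [this, Finset.card_erase_of_mem hfm, if_pos rfl]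
        have hpos := Nat.pos_of_ne_zero hn
        rw [Nat.not_even_iff_odd] at heven
        rcases heven with ⟨k, hk⟩
        exact ⟨k, by omega⟩
      · by_cases htc : -(a + b) = c
        · -- count for the extra color: exactly the first child
          right
          have : (childs T hT r v).filter (fun u => col T hT r u = c) =
              {fst r (childs T hT r v)} := by
            ext u
            simp only [Finset.mem_filter, Finset.mem_singleton]
            constructor
            · rintro ⟨hu, hcu⟩
              rw [hcol u hu] at hcu
              by_contra hne'
              rw [if_neg hne'] at hcu
              exact hbc hcu
            · rintro rfl
              exact ⟨hfm, by rw [hcol _ hfm, if_pos rfl]; exact htc⟩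
          rw [this, Finset.card_singleton, if_neg hbc]
          exact odd_one
        · left
          rw [if_neg hbc, Finset.card_eq_zero.mpr, Nat.add_zero]
          rw [Finset.filter_eq_empty_iff]
          intro u hu
          rw [hcol u hu]
          split_ifs <;> [exact htc; exact hbc]

end StrongOddAux


/-- For every finite tree `T`, the strong odd chromatic number is at most 3. -/
theorem strongOddChromaticNumber_le_three_of_isTree {V : Type*} [Fintype V]
    (T : SimpleGraph V) (hT : T.IsTree) :
    T.strongOddChromaticNumber ≤ 3 := by
  classical
  obtain ⟨r⟩ : Nonempty V := hT.isConnected.nonempty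
  apply Nat.sInf_le
  exact ⟨StrongOddAux.col T hT r,
    StrongOddAux.col_proper T hT r,
    StrongOddAux.col_counts T hT r⟩
end

section
/- For every finite tree T, χ_so(T) = 2 holds if and only if T is odd, i.e., every vertex of T has odd degree. -/
private lemma fin2_eq_of_ne {a b c : Fin 2} (h1 : a ≠ c) (h2 : b ≠ c) : a = b := by
  fin_cases a <;> fin_cases b <;> fin_cases c <;> simp_all

/-- If `φ` is a proper 2-coloring, the set of neighbors of `v` colored `c ≠ φ v`
is all of the neighbors. -/
private lemma card_neighbors_colored {V : Type*} [Fintype V] (T : SimpleGraph V)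
    [DecidableRel T.Adj] (φ : V → Fin 2) (hφ : ∀ ⦃u v⦄, T.Adj u v → φ u ≠ φ v)
    (v : V) (c : Fin 2) (hc : c ≠ φ v) :
    Nat.card {u // T.Adj v u ∧ φ u = c} = T.degree v := by
  have e1 : Nat.card {u // T.Adj v u ∧ φ u = c} = Nat.card {u // T.Adj v u} :=
    Nat.card_congr (Equiv.subtypeEquivRight fun u =>
      ⟨fun h => h.1, fun h => ⟨h, fin2_eq_of_ne (hφ h.symm) hc⟩⟩)
  have e2 : Nat.card {u // T.Adj v u} = Nat.card (T.neighborSet v) :=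
    Nat.card_congr (Equiv.subtypeEquivRight fun u => (T.mem_neighborSet v u).symm)
  rw [e1, e2, Nat.card_eq_fintype_card, T.card_neighborSet_eq_degree v]

/-- Every tree has a proper 2-coloring. -/
private lemma tree_proper_two_coloring {V : Type*} (T : SimpleGraph V) (hT : T.IsTree) :
    ∃ φ : V → Fin 2, ∀ ⦃u v⦄, T.Adj u v → φ u ≠ φ v := by
  classical
  obtain ⟨r⟩ := hT.isConnected.nonempty
  choose P hP hPu using fun v => hT.existsUnique_path r v
  have key : ∀ u v, T.Adj u v →
      (P v).length = (P u).length + 1 ∨ (P u).length = (P v).length + 1 := by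
    intro u v huv
    by_cases hv : v ∈ (P u).support
    · right
      have hp1 : ((P u).takeUntil v hv).IsPath := (hP u).takeUntil hv
      have hp2 : ((P u).dropUntil v hv).IsPath := (hP u).dropUntil hv
      have h1 : (P u).takeUntil v hv = P v := hPu v _ hp1
      have h2 : (P u).dropUntil v hv = (SimpleGraph.Path.singleton huv.symm : T.Walk v u) := by
        have := hT.IsAcyclic.path_unique ⟨_, hp2⟩ (SimpleGraph.Path.singleton huv.symm)
        exact congrArg Subtype.val this
      have hspec := (P u).take_spec hv
      have hlen : ((P u).takeUntil v hv).length + ((P u).dropUntil v hv).length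
          = (P u).length := by
        rw [← SimpleGraph.Walk.length_append, hspec]
      rw [h1, h2] at hlen
      simpa [SimpleGraph.Path.singleton] using hlen.symm
    · left
      have hq : ((P u).concat huv).IsPath := by
        rw [← SimpleGraph.Walk.isPath_reverse_iff, SimpleGraph.Walk.reverse_concat]
        exact ((hP u).reverse).cons (by simpa using hv)
      have h1 : (P u).concat huv = P v := hPu v _ hq
      have := SimpleGraph.Walk.length_concat (P u) huv
      rw [h1] at this
      exact this
  refine ⟨fun v => ⟨(P v).length % 2, Nat.mod_lt _ (by norm_num)⟩, ?_⟩
  intro u v huv h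
  have h' : (P u).length % 2 = (P v).length % 2 := congrArg Fin.val h
  rcases key u v huv with h1 | h1 <;> omega

/-- For every finite tree `T`, `χ_so(T) = 2` iff every vertex of `T` has odd degree. -/
theorem strongOddChromaticNumber_eq_two_iff_odd_tree {V : Type*} [Fintype V]
    (T : SimpleGraph V) [DecidableRel T.Adj] (hT : T.IsTree) :
    T.strongOddChromaticNumber = 2 ↔ ∀ v : V, Odd (T.degree v) := by
  set S : Set ℕ := {k | ∃ φ : V → Fin k, T.IsStrongOddColoring φ} with hS
  constructor
  · intro h v
    have hne : S.Nonempty := by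
      by_contra hcon
      rw [Set.not_nonempty_iff_eq_empty] at hcon
      rw [SimpleGraph.strongOddChromaticNumber, ← hS, hcon, Nat.sInf_empty] at h
      exact two_ne_zero h.symm
    have h2 : 2 ∈ S := by
      have := Nat.sInf_mem hne
      rwa [show sInf S = 2 from h] at this
    obtain ⟨φ, hφp, hφo⟩ := h2
    have h1 : (1 : ℕ) ∉ S := by
      intro h1
      have := Nat.sInf_le h1
      rw [show sInf S = 2 from h] at this
      omega
    -- degree v ≠ 0 : otherwise V is a single vertex and 1 ∈ S
    have hdeg : T.degree v ≠ 0 := by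
      intro hd
      apply h1
      have hsingle : ∀ u : V, u = v := by
        intro u
        obtain ⟨w⟩ := (hT.isConnected v u)
        cases w with
        | nil => rfl
        | cons ha _ =>
          simp only [SimpleGraph.degree, Finset.card_eq_zero] at hd
          exact absurd ((T.mem_neighborFinset v _).mpr ha) (by simp [hd])
      have hnoadj : ∀ a b : V, ¬ T.Adj a b := by
        intro a b hab
        rw [hsingle a, hsingle b] at hab
        exact T.irrefl hab
      refine ⟨fun _ => 0, fun a b hab => absurd hab (hnoadj a b), fun w c => ?_⟩
      left
      have : IsEmpty {u // T.Adj w u ∧ (fun _ => (0 : Fin 1)) u = c} :=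
        ⟨fun ⟨u, hu, _⟩ => hnoadj w u hu⟩
      exact Nat.card_of_isEmpty
    -- pick a neighbor
    obtain ⟨w, hw⟩ : ∃ w, T.Adj v w := by
      by_contra hcon
      push_neg at hcon
      apply hdeg
      simp only [SimpleGraph.degree, Finset.card_eq_zero]
      ext u
      simp [hcon u]
    have hcne : φ w ≠ φ v := (hφp hw.symm)
    have hcard := card_neighbors_colored T φ hφp v (φ w) hcne
    rcases hφo v (φ w) with h0 | hodd
    · rw [hcard] at h0; exact absurd h0 hdeg
    · rwa [hcard] at hodd
  · intro hodd
    obtain ⟨φ, hφ⟩ := tree_proper_two_coloring T hT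
    have hVne : Nonempty V := hT.isConnected.nonempty
    have hedge : ∀ v : V, ∃ w, T.Adj v w := by
      intro v
      have := hodd v
      have hpos : 0 < T.degree v := by
        rcases this with ⟨k, hk⟩; omega
      obtain ⟨w, hw⟩ := Finset.card_pos.mp hpos
      exact ⟨w, (T.mem_neighborFinset v w).mp hw⟩
    have h2 : 2 ∈ S := by
      refine ⟨φ, hφ, fun v c => ?_⟩
      by_cases hc : c = φ v
      · left
        have : IsEmpty {u // T.Adj v u ∧ φ u = c} :=
          ⟨fun ⟨u, hu, he⟩ => hφ hu.symm (he.trans hc)⟩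
        exact Nat.card_of_isEmpty
      · right
        rw [card_neighbors_colored T φ hφ v c hc]
        exact hodd v
    have hlow : ∀ k ∈ S, 2 ≤ k := by
      rintro k ⟨ψ, hψp, _⟩
      by_contra hk
      interval_cases k
      · obtain ⟨v⟩ := hVne
        exact (ψ v).elim0
      · obtain ⟨v⟩ := hVne
        obtain ⟨w, hw⟩ := hedge v
        exact hψp hw (Subsingleton.elim _ _)
    exact le_antisymm (Nat.sInf_le h2) (le_csInf ⟨2, h2⟩ hlow)
end

section
/- For every integer n ≥ 3 divisible by 3, the cycle graph C_n satisfies χ_so(C_n) = 3. -/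
/-- For every `n ≥ 3` divisible by 3, the cycle `C_n` has strong odd chromatic number 3. -/
theorem strongOddChromaticNumber_cycleGraph_of_three_dvd (n : ℕ) (hn : 3 ≤ n) (h3 : 3 ∣ n) :
    (SimpleGraph.cycleGraph n).strongOddChromaticNumber = 3 := by
  obtain ⟨m, rfl⟩ : ∃ m, n = m + 3 := ⟨n - 3, by omega⟩
  -- color of successor
  have hsucc : ∀ v : Fin (m + 3), (v + 1).val % 3 = (v.val + 1) % 3 := by
    intro v
    rw [Fin.val_add_one]
    split
    · next h =>
      subst h
      simp only [Fin.val_last]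
      omega
    · rfl
  -- adjacency characterization
  have hadj : ∀ u v : Fin (m + 3),
      (SimpleGraph.cycleGraph (m + 3)).Adj v u ↔ (u = v + 1 ∨ u = v - 1) := by
    intro u v
    rw [show m + 3 = (m + 1) + 2 by omega] at *
    rw [SimpleGraph.cycleGraph_adj]
    constructor
    · rintro (h | h)
      · right
        have := sub_eq_iff_eq_add.mp h
        rw [this]; abel
      · left
        have := sub_eq_iff_eq_add.mp h
        rw [this]; abel
    · rintro (rfl | rfl)
      · right; abel
      · left; abel
  have hpm : ∀ v : Fin (m + 3), (v + 1).val % 3 ≠ (v - 1).val % 3 := by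
    intro v h
    have h1 := hsucc v
    have h2 := hsucc (v - 1)
    rw [sub_add_cancel] at h2
    omega
  have hp1 : ∀ v : Fin (m + 3), (v + 1).val % 3 ≠ v.val % 3 := by
    intro v h; have h1 := hsucc v; omega
  have hm1 : ∀ v : Fin (m + 3), (v - 1).val % 3 ≠ v.val % 3 := by
    intro v h
    have h2 := hsucc (v - 1)
    rw [sub_add_cancel] at h2
    omega
  have h3mem : 3 ∈ {k | ∃ φ : Fin (m+3) → Fin k,
      (SimpleGraph.cycleGraph (m+3)).IsStrongOddColoring φ} := by
    refine ⟨fun v => ⟨v.val % 3, Nat.mod_lt _ (by norm_num)⟩, ?_, ?_⟩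
    · intro u v huv
      rw [hadj v u] at huv
      rcases huv with rfl | rfl
      · simpa [Fin.ext_iff, eq_comm] using (hp1 u)
      · simpa [Fin.ext_iff, eq_comm] using (hm1 u)
    · intro v c
      have : Subsingleton {u // (SimpleGraph.cycleGraph (m+3)).Adj v u ∧
          (⟨u.val % 3, Nat.mod_lt _ (by norm_num)⟩ : Fin 3) = c} := by
        constructor
        rintro ⟨a, ha, hac⟩ ⟨b, hb, hbc⟩
        rw [hadj a v] at ha
        rw [hadj b v] at hb
        have hab : a.val % 3 = b.val % 3 := by
          have := hac.trans hbc.symm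
          simpa [Fin.ext_iff] using this
        have : a = b := by
          rcases ha with rfl | rfl <;> rcases hb with rfl | rfl
          · rfl
          · exact absurd hab (hpm v)
          · exact absurd hab.symm (hpm v)
          · rfl
        simp [this]
      have hle := Finite.card_le_one_iff_subsingleton.mpr this
      interval_cases h : Nat.card {u // (SimpleGraph.cycleGraph (m+3)).Adj v u ∧
          (⟨u.val % 3, Nat.mod_lt _ (by norm_num)⟩ : Fin 3) = c}
      · exact Or.inl rfl
      · exact Or.inr ⟨0, rfl⟩
  apply le_antisymm (Nat.sInf_le h3mem)
  apply le_csInf ⟨3, h3mem⟩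
  intro k hk
  obtain ⟨φ, hproper, hodd⟩ := hk
  by_contra hlt
  push_neg at hlt
  have h01 : (SimpleGraph.cycleGraph (m+3)).Adj (0 : Fin (m+3)) 1 := by
    rw [hadj]; left; rw [zero_add]
  interval_cases k
  · exact (φ 0).elim0
  · exact absurd (Subsingleton.elim (φ 0) (φ 1)) (hproper h01)
  · -- k = 2
    have h0m : (SimpleGraph.cycleGraph (m+3)).Adj (0 : Fin (m+3)) (-1) := by
      rw [hadj]; right; rw [zero_sub]
    have hne : (1 : Fin (m+3)) ≠ -1 := by
      rw [Fin.ne_iff_vne]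
      simp [Fin.coe_neg_one]
    set c := φ 1 with hc
    have hcol : ∀ u : Fin (m+3), (SimpleGraph.cycleGraph (m+3)).Adj 0 u → φ u = c := by
      intro u hu
      have h1 : φ u ≠ φ 0 := fun h => hproper hu h.symm
      have h2 : c ≠ φ 0 := fun h => hproper h01 h.symm
      omega
    have hcard : Nat.card {u // (SimpleGraph.cycleGraph (m+3)).Adj 0 u ∧ φ u = c} = 2 := by
      rw [Nat.card_eq_two_iff]
      refine ⟨⟨1, h01, hcol 1 h01⟩, ⟨-1, h0m, hcol (-1) h0m⟩, ?_, ?_⟩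
      · simp [Subtype.ext_iff, hne]
      · ext ⟨u, hu, huc⟩
        simp only [Set.mem_insert_iff, Set.mem_singleton_iff, Set.mem_univ, iff_true]
        rw [hadj] at hu
        rcases hu with rfl | rfl
        · left; rw [Subtype.ext_iff]; exact zero_add 1
        · right; rw [Subtype.ext_iff]; exact zero_sub 1
    rcases hodd 0 c with h | h
    · omega
    · rw [hcard] at h; exact (Nat.not_odd_iff_even.mpr even_two) h
end

section
/- For every integer n ≥ 3 with 3 ∤ n and n ≠ 5, the cycle graph C_n satisfies χ_so(C_n) = 4. -/
namespace StrongOddAux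

open SimpleGraph Finset

open scoped Fin.NatCast Fin.CommRing

attribute [local instance] Classical.propDecidable

variable {m : ℕ} {α : Type*}

lemma adj_iff_s3 (v u : Fin (m + 3)) :
    (cycleGraph (m + 3)).Adj v u ↔ u = v - 1 ∨ u = v + 1 := by
  rw [SimpleGraph.cycleGraph_adj]
  constructor
  · rintro (h | h)
    · left; rw [eq_sub_iff_add_eq, ← h]; ring
    · right; rw [← h]; ring
  · rintro (rfl | rfl)
    · left; exact sub_sub_cancel v 1
    · right; exact add_sub_cancel_left v 1

lemma sub_one_ne_add_one (v : Fin (m + 3)) : v - 1 ≠ v + 1 := by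
  intro h
  have h2 : (2 : Fin (m + 3)) = 0 := by
    have e : (v + 1) - (v - 1) = (2 : Fin (m + 3)) := by ring
    rw [← e, h, sub_self]
  have := congrArg Fin.val h2
  rw [Fin.val_two] at this
  simp at this

lemma card_eq (φ : Fin (m + 3) → α) (v : Fin (m + 3)) (c : α) :
    Nat.card {u // (cycleGraph (m + 3)).Adj v u ∧ φ u = c}
      = (({v - 1, v + 1} : Finset (Fin (m + 3))).filter (fun u => φ u = c)).card := by
  rw [← Nat.card_eq_finsetCard]
  exact Nat.card_congr (Equiv.subtypeEquivRight (fun u => by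
    simp only [Finset.mem_filter, Finset.mem_insert, Finset.mem_singleton, adj_iff_s3]))

lemma key (φ : Fin (m + 3) → α) :
    (cycleGraph (m + 3)).IsStrongOddColoring φ ↔
      (∀ v, φ v ≠ φ (v + 1)) ∧ (∀ v, φ v ≠ φ (v + 2)) := by
  constructor
  · rintro ⟨hp, ho⟩
    refine ⟨fun v => hp ((adj_iff_s3 v (v+1)).2 (Or.inr rfl)), fun v => ?_⟩
    intro h
    have h2 := ho (v + 1) (φ (v + 2))
    rw [card_eq] at h2
    have e1 : (v + 1) - 1 = v := by ring
    have e2 : (v + 1) + 1 = v + 2 := by ring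
    rw [e1, e2] at h2
    rw [Finset.filter_insert, Finset.filter_singleton, if_pos h, if_pos rfl] at h2
    rw [Finset.card_insert_of_notMem (by
      simp only [Finset.mem_singleton]
      have hne := sub_one_ne_add_one (v + 1); rw [e1, e2] at hne; exact hne)] at h2
    rw [Finset.card_singleton] at h2
    rcases h2 with h2 | h2
    · exact absurd h2 (by simp)
    · exact absurd h2 (by decide)
  · rintro ⟨h1, h2⟩
    constructor
    · intro u v huv
      rcases (adj_iff_s3 u v).1 huv with rfl | rfl
      · intro h
        have := h1 (u - 1)
        rw [show (u - 1) + 1 = u from by ring] at this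
        exact this h.symm
      · exact h1 u
    · intro v c
      rw [card_eq]
      rw [Finset.filter_insert, Finset.filter_singleton]
      have hne : φ (v - 1) ≠ φ (v + 1) := by
        have := h2 (v - 1)
        rwa [show (v - 1) + 2 = v + 1 from by ring] at this
      split_ifs with hA hB hB
      · exact absurd (hA.trans hB.symm) hne
      · right; simp
      · right; simp
      · left; simp

lemma tri : ∀ a b c d : Fin 3, a ≠ b → b ≠ c → a ≠ c → c ≠ d → b ≠ d → d = a := by
  intro a b c d hab hbc hac hcd hbd
  have ha := a.isLt; have hb := b.isLt; have hc := c.isLt; have hd := d.isLt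
  simp only [Ne, Fin.ext_iff] at hab hbc hac hcd hbd ⊢
  omega

/-- No strong odd 3-coloring when `3 ∤ n`. -/
lemma no3 (h3 : ¬ 3 ∣ (m + 3)) (φ : Fin (m + 3) → Fin 3) :
    ¬ (cycleGraph (m + 3)).IsStrongOddColoring φ := by
  rw [key]
  rintro ⟨h1, h2⟩
  have step : ∀ v : Fin (m + 3), φ (v + 3) = φ v := by
    intro v
    have B := h1 (v + 1); rw [show (v+1)+1 = v + 2 from by ring] at B
    have D := h1 (v + 2); rw [show (v+2)+1 = v + 3 from by ring] at D
    have E := h2 (v + 1); rw [show (v+1)+2 = v + 3 from by ring] at E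
    exact tri (φ v) (φ (v+1)) (φ (v+2)) (φ (v+3)) (h1 v) B (h2 v) D E
  have per : ∀ k : ℕ, φ ((3 * k : ℕ) : Fin (m + 3)) = φ 0 := by
    intro k
    induction k with
    | zero => simp
    | succ k ih =>
      have e : ((3 * (k + 1) : ℕ) : Fin (m + 3)) = ((3 * k : ℕ) : Fin (m + 3)) + 3 := by
        push_cast; ring
      rw [e, step, ih]
  have hcop : Nat.Coprime 3 (m + 3) :=
    (Nat.Prime.coprime_iff_not_dvd Nat.prime_three).2 h3
  obtain ⟨t, -, ht⟩ := Nat.exists_mul_mod_eq_one_of_coprime hcop (by omega)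
  have h0 : ((3 * t : ℕ) : Fin (m + 3)) = (0 : Fin (m + 3)) + 1 := by
    rw [zero_add, Fin.ext_iff, Fin.val_natCast, ht, Fin.val_one]
  have hp := per t
  rw [h0] at hp
  exact h1 0 hp.symm

/-- The explicit 4-coloring pattern, as a function on `ℕ`. -/
def pat (n i : ℕ) : ℕ :=
  if i < (if n % 3 = 1 then n - 4 else n - 8) then i % 3
  else (i - (if n % 3 = 1 then n - 4 else n - 8)) % 4

lemma pat_lt (n i : ℕ) : pat n i < 4 := by
  unfold pat; split_ifs <;> omega

lemma pat_ne (n : ℕ) (hn : 3 ≤ n) (h3 : ¬ 3 ∣ n) (h5 : n ≠ 5) (a b : ℕ)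
    (ha : a < n) (hb : b < n)
    (hab : (b = a + 1 ∨ (a + 1 = n ∧ b = 0)) ∨
      (b = a + 2 ∨ (a + 2 = n ∧ b = 0) ∨ (a + 1 = n ∧ b = 1))) :
    pat n a ≠ pat n b := by
  have hmod : n % 3 = 1 ∨ n % 3 = 2 := by omega
  unfold pat
  rcases hmod with h | h <;> simp only [h] <;> split_ifs <;> omega

lemma exists4 (h3 : ¬ 3 ∣ (m + 3)) (h5 : m + 3 ≠ 5) :
    ∃ φ : Fin (m + 3) → Fin 4, (cycleGraph (m + 3)).IsStrongOddColoring φ := by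
  refine ⟨fun v => ⟨pat (m + 3) v.val, pat_lt (m + 3) v.val⟩, ?_⟩
  rw [key]
  constructor
  · intro v h
    apply pat_ne (m + 3) (by omega) h3 h5 v.val (v+1).val v.isLt (v+1).isLt ?_
      (congrArg Fin.val h)
    left
    rw [Fin.val_add, Fin.val_one]
    have := v.isLt
    rcases Nat.lt_or_ge (v.val + 1) (m + 3) with hlt | hge
    · left; rw [Nat.mod_eq_of_lt hlt]
    · have he : v.val + 1 = m + 3 := by omega
      right
      refine ⟨he, ?_⟩
      rw [he, Nat.mod_self]
  · intro v h
    apply pat_ne (m + 3) (by omega) h3 h5 v.val (v+2).val v.isLt (v+2).isLt ?_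
      (congrArg Fin.val h)
    right
    rw [Fin.val_add, Fin.val_two]
    have := v.isLt
    rcases Nat.lt_or_ge (v.val + 2) (m + 3) with hlt | hge
    · left; rw [Nat.mod_eq_of_lt hlt]
    · rcases Nat.lt_or_ge (v.val + 2) (m + 4) with h2 | h2
      · have he : v.val + 2 = m + 3 := by omega
        right; left
        refine ⟨he, ?_⟩
        rw [he, Nat.mod_self]
      · have he : v.val + 2 = (m + 3) + 1 := by omega
        right; right
        refine ⟨by omega, ?_⟩
        rw [he, Nat.add_mod_left (m + 3) 1, Nat.mod_eq_of_lt (by omega)]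

lemma comp_strongOdd {V β γ : Type*} (G : SimpleGraph V) (g : β → γ)
    (hg : Function.Injective g) (φ : V → β) (h : G.IsStrongOddColoring φ) :
    G.IsStrongOddColoring (g ∘ φ) := by
  obtain ⟨h1, h2⟩ := h
  refine ⟨fun u v huv he => h1 huv (hg he), fun v c => ?_⟩
  by_cases hc : ∃ c', g c' = c
  · obtain ⟨c', rfl⟩ := hc
    have e : Nat.card {u // G.Adj v u ∧ (g ∘ φ) u = g c'}
        = Nat.card {u // G.Adj v u ∧ φ u = c'} :=
      Nat.card_congr (Equiv.subtypeEquivRight fun u => by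
        simp only [Function.comp_apply, hg.eq_iff])
    rw [e]
    exact h2 v c'
  · left
    have : IsEmpty {u // G.Adj v u ∧ (g ∘ φ) u = c} :=
      ⟨fun ⟨u, _, he⟩ => hc ⟨φ u, he⟩⟩
    exact Nat.card_of_isEmpty

end StrongOddAux

/-- For every `n ≥ 3` with `3 ∤ n` and `n ≠ 5`, the cycle `C_n` has
strong odd chromatic number 4. -/
theorem strongOddChromaticNumber_cycleGraph_of_not_three_dvd (n : ℕ) (hn : 3 ≤ n)
    (h3 : ¬ 3 ∣ n) (h5 : n ≠ 5) :
    (SimpleGraph.cycleGraph n).strongOddChromaticNumber = 4 := by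
  obtain ⟨m, rfl⟩ : ∃ m, n = m + 3 := ⟨n - 3, by omega⟩
  unfold SimpleGraph.strongOddChromaticNumber
  have hex := StrongOddAux.exists4 h3 h5
  apply le_antisymm
  · exact Nat.sInf_le hex
  · refine le_csInf ⟨4, hex⟩ ?_
    intro k hk
    by_contra hlt
    push_neg at hlt
    obtain ⟨φ, hφ⟩ := hk
    exact StrongOddAux.no3 h3 ((Fin.castLE (by omega) : Fin k → Fin 3) ∘ φ)
      (StrongOddAux.comp_strongOdd _ _ (Fin.castLE_injective _) φ hφ)
end

section
/- The cycle graph C_5 on five vertices satisfies χ_so(C_5) = 5. -/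
lemma id_strongOdd : (SimpleGraph.cycleGraph 5).IsStrongOddColoring (id : Fin 5 → Fin 5) := by
  simp only [SimpleGraph.IsStrongOddColoring, Nat.card_eq_fintype_card]
  decide

lemma adj_iff_c5 (v u : Fin 5) :
    (SimpleGraph.cycleGraph 5).Adj v u ↔ u = v - 1 ∨ u = v + 1 := by
  revert v u; decide

lemma vsub_ne_vadd (v : Fin 5) : v - 1 ≠ v + 1 := by revert v; decide

lemma card_two {α : Type*} (φ : Fin 5 → α) (v : Fin 5) (c : α)
    (h1 : φ (v - 1) = c) (h2 : φ (v + 1) = c) :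
    Nat.card {u // (SimpleGraph.cycleGraph 5).Adj v u ∧ φ u = c} = 2 := by
  classical
  rw [Nat.card_eq_fintype_card, Fintype.card_subtype]
  have : (Finset.univ.filter fun u => (SimpleGraph.cycleGraph 5).Adj v u ∧ φ u = c)
      = {v - 1, v + 1} := by
    ext u
    simp only [Finset.mem_filter, Finset.mem_univ, true_and, adj_iff_c5,
      Finset.mem_insert, Finset.mem_singleton]
    constructor
    · rintro ⟨h, -⟩; exact h
    · rintro (rfl | rfl)
      · exact ⟨Or.inl rfl, h1⟩
      · exact ⟨Or.inr rfl, h2⟩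
  rw [this, Finset.card_insert_of_notMem (by simp [vsub_ne_vadd v]),
    Finset.card_singleton]

lemma pair_cases : ∀ u w : Fin 5, u ≠ w → (SimpleGraph.cycleGraph 5).Adj u w ∨
    ∃ v : Fin 5, (v - 1 = u ∧ v + 1 = w) ∨ (v - 1 = w ∧ v + 1 = u) := by
  decide

lemma strongOdd_injective {α : Type*} {φ : Fin 5 → α}
    (h : (SimpleGraph.cycleGraph 5).IsStrongOddColoring φ) : Function.Injective φ := by
  intro u w hc
  by_contra hne
  rcases pair_cases u w hne with hadj | ⟨v, ⟨h1, h2⟩ | ⟨h1, h2⟩⟩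
  · exact h.1 hadj hc
  · have := h.2 v (φ u)
    rw [card_two φ v (φ u) (by rw [h1]) (by rw [h2, ← hc])] at this
    rcases this with h' | h' <;> simp [Nat.odd_iff] at h'
  · have := h.2 v (φ u)
    rw [card_two φ v (φ u) (by rw [h1, ← hc]) (by rw [h2])] at this
    rcases this with h' | h' <;> simp [Nat.odd_iff] at h'

/-- The cycle `C_5` has strong odd chromatic number 5. -/
theorem strongOddChromaticNumber_cycleGraph_five :
    (SimpleGraph.cycleGraph 5).strongOddChromaticNumber = 5 := by
  unfold SimpleGraph.strongOddChromaticNumber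
  have h5 : ∃ φ : Fin 5 → Fin 5, (SimpleGraph.cycleGraph 5).IsStrongOddColoring φ :=
    ⟨id, id_strongOdd⟩
  have hmem : (5 : ℕ) ∈ {k | ∃ φ : Fin 5 → Fin k,
      (SimpleGraph.cycleGraph 5).IsStrongOddColoring φ} := h5
  apply le_antisymm
  · exact Nat.sInf_le hmem
  · apply le_csInf ⟨5, hmem⟩
    rintro k ⟨φ, hφ⟩
    have : Fintype.card (Fin 5) ≤ Fintype.card (Fin k) :=
      Fintype.card_le_of_injective φ (strongOdd_injective hφ)
    simpa using this
end

section
/- The graph G_7 = K_1 + P_6, obtained by joining one universal vertex to every vertex of a path on six vertices, satisfies χ_so(G_7) = 7. -/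
/-- The join of a graph `H` with a single universal vertex. -/
def SimpleGraph.addUniversal {α : Type*} (H : SimpleGraph α) : SimpleGraph (Option α) :=
  SimpleGraph.fromRel (fun x y => (∃ a b, x = some a ∧ y = some b ∧ H.Adj a b) ∨ x = none)

abbrev G6 : SimpleGraph (Option (Fin 6)) := (SimpleGraph.pathGraph 6).addUniversal

lemma adj_ns (k : Fin 6) : G6.Adj none (some k) := by
  simp [SimpleGraph.addUniversal, SimpleGraph.fromRel_adj]

lemma adj_ss (a b : Fin 6) : G6.Adj (some a) (some b) ↔ (SimpleGraph.pathGraph 6).Adj a b := by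
  simp only [SimpleGraph.addUniversal, SimpleGraph.fromRel_adj]
  constructor
  · rintro ⟨h, (⟨x,y,hx,hy,hadj⟩|h1)|(⟨x,y,hx,hy,hadj⟩|h1)⟩
    · cases hx; cases hy; exact hadj
    · exact absurd h1 (by simp)
    · cases hx; cases hy; exact hadj.symm
    · exact absurd h1 (by simp)
  · intro h
    exact ⟨fun he => h.ne (by injection he), Or.inl (Or.inl ⟨a, b, rfl, rfl, h⟩)⟩

lemma pair_card {α : Type*} {P : α → Prop} {a b : α} (hab : a ≠ b)
    (h : ∀ u, P u ↔ u = a ∨ u = b) : Nat.card {u // P u} = 2 := by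
  have hs : {u | P u} = {a, b} := Set.ext fun u => by simpa using h u
  have : Nat.card {u // P u} = Set.ncard {u | P u} := Nat.card_coe_set_eq _
  rw [this, hs, Set.ncard_pair hab]

lemma comp_inj_strongOdd {V α β : Type*} {G : SimpleGraph V} {φ : V → α} {ψ : α → β}
    (hφ : G.IsStrongOddColoring φ) (hψ : Function.Injective ψ) :
    G.IsStrongOddColoring (ψ ∘ φ) := by
  constructor
  · intro u v h hc
    exact hφ.1 h (hψ hc)
  · intro v c
    by_cases hc : ∃ c', ψ c' = c
    · obtain ⟨c', rfl⟩ := hc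
      have e : Nat.card {u // G.Adj v u ∧ (ψ ∘ φ) u = ψ c'}
          = Nat.card {u // G.Adj v u ∧ φ u = c'} :=
        Nat.card_congr (Equiv.subtypeEquivRight fun u => by simp [hψ.eq_iff])
      rw [e]; exact hφ.2 v c'
    · left
      have : IsEmpty {u // G.Adj v u ∧ (ψ ∘ φ) u = c} :=
        ⟨fun ⟨u, _, h⟩ => hc ⟨φ u, h⟩⟩
      exact Nat.card_of_isEmpty

lemma no6 : ¬ ∃ φ : Option (Fin 6) → Fin 6, G6.IsStrongOddColoring φ := by
  rintro ⟨φ, hp, ho⟩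
  set φ' : Fin 6 → Fin 6 := fun i => φ (some i) with hφ'
  -- no path vertex shares a color with the universal vertex
  have h0 : ∀ i : Fin 6, φ' i ≠ φ none := fun i => (hp (adj_ns i)).symm
  -- adjacent path vertices get different colors
  have h1 : ∀ i j : Fin 6, (SimpleGraph.pathGraph 6).Adj i j → φ' i ≠ φ' j :=
    fun i j h => hp ((adj_ss i j).mpr h)
  -- vertices at distance two get different colors
  have h2 : ∀ i m j : Fin 6, (SimpleGraph.pathGraph 6).Adj m i →
      (SimpleGraph.pathGraph 6).Adj m j → i ≠ j → φ' i ≠ φ' j := by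
    intro i m j hmi hmj hij heq
    have hcard : Nat.card {u // G6.Adj (some m) u ∧ φ u = φ' i} = 2 := by
      refine pair_card (a := some i) (b := some j) (by simpa using hij) ?_
      intro u
      match u with
      | none =>
        simp only [reduceCtorEq, or_self, iff_false]
        rintro ⟨-, hcol⟩
        exact h0 i ((congrArg _ rfl).trans hcol.symm) |>.elim
      | some k =>
        rw [adj_ss]
        constructor
        · rintro ⟨hadj, hcol⟩
          rw [SimpleGraph.pathGraph_adj] at hmi hmj hadj
          have hk : k = i ∨ k = j := by
            have hij' : (i : ℕ) ≠ (j : ℕ) := fun h => hij (Fin.ext h)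
            rcases hadj with h|h <;> rcases hmi with h'|h' <;> rcases hmj with h''|h'' <;>
              [skip; skip; skip; skip; skip; skip; skip; skip] <;>
              first
                | (left; exact Fin.ext (by omega))
                | (right; exact Fin.ext (by omega))
          simpa using hk
        · rintro (h|h) <;> injection h with h <;> subst h
          · exact ⟨hmi, rfl⟩
          · exact ⟨hmj, heq.symm⟩
    rcases ho (some m) (φ' i) with h|h
    · rw [hcard] at h; exact absurd h (by norm_num)
    · rw [hcard] at h; exact absurd h (by norm_num)
  -- any two distinct vertices within distance two get different colors
  have hnear : ∀ i j : Fin 6, i ≠ j → (j : ℕ) ≤ (i : ℕ) + 2 → (i : ℕ) ≤ (j : ℕ) + 2 →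
      φ' i ≠ φ' j := by
    intro i j hij hle1 hle2
    have hij' : (i : ℕ) ≠ (j : ℕ) := fun h => hij (Fin.ext h)
    rcases Nat.lt_or_ge (i : ℕ) (j : ℕ) with hlt | hge
    · rcases Nat.eq_or_lt_of_le (Nat.succ_le_of_lt hlt) with h|h
      · exact h1 i j (SimpleGraph.pathGraph_adj.mpr (Or.inl h))
      · -- j = i + 2
        have hj : (j : ℕ) = (i : ℕ) + 2 := by omega
        have him : (i : ℕ) + 1 < 6 := by omega
        refine h2 i ⟨(i : ℕ) + 1, him⟩ j ?_ ?_ hij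
        · exact SimpleGraph.pathGraph_adj.mpr (Or.inr rfl)
        · exact SimpleGraph.pathGraph_adj.mpr (Or.inl (by simp [hj]))
    · rcases Nat.eq_or_lt_of_le (Nat.succ_le_of_lt (by omega : (j:ℕ) < i)) with h|h
      · exact h1 i j (SimpleGraph.pathGraph_adj.mpr (Or.inr h))
      · have hi : (i : ℕ) = (j : ℕ) + 2 := by omega
        have hjm : (j : ℕ) + 1 < 6 := by omega
        refine h2 i ⟨(j : ℕ) + 1, hjm⟩ j ?_ ?_ hij
        · exact SimpleGraph.pathGraph_adj.mpr (Or.inl (by simp [hi]))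
        · exact SimpleGraph.pathGraph_adj.mpr (Or.inr rfl)
  -- φ' is injective
  have hinj : Function.Injective φ' := by
    intro i j heq
    by_contra hij
    have hij' : (i : ℕ) ≠ (j : ℕ) := fun h => hij (Fin.ext h)
    -- near case handled by hnear
    rcases Nat.lt_or_ge ((max (i:ℕ) (j:ℕ)) ) ((min (i:ℕ) (j:ℕ)) + 3) with hnr | hfar
    · exact hnear i j hij (by omega) (by omega) heq
    · -- far case: the color class of φ' i at the universal vertex has exactly two elements
      have hblock : ∀ k : Fin 6, φ' k = φ' i → k = i ∨ k = j := by
        intro k hk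
        by_contra hknot
        push_neg at hknot
        obtain ⟨hki, hkj⟩ := hknot
        -- two of i, j, k lie within distance 2
        have hki' : (k : ℕ) ≠ (i : ℕ) := fun h => hki (Fin.ext h)
        have hkj' : (k : ℕ) ≠ (j : ℕ) := fun h => hkj (Fin.ext h)
        have hi6 : (i : ℕ) < 6 := i.isLt
        have hj6 : (j : ℕ) < 6 := j.isLt
        have hk6 : (k : ℕ) < 6 := k.isLt
        rcases (by omega : ((k:ℕ) ≤ (i:ℕ) + 2 ∧ (i:ℕ) ≤ (k:ℕ) + 2) ∨
            ((k:ℕ) ≤ (j:ℕ) + 2 ∧ (j:ℕ) ≤ (k:ℕ) + 2)) with ⟨ha, hb⟩ | ⟨ha, hb⟩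
        · exact hnear k i hki hb ha hk
        · exact hnear k j hkj hb ha (hk.trans heq)
      have hcard : Nat.card {u // G6.Adj none u ∧ φ u = φ' i} = 2 := by
        refine pair_card (a := some i) (b := some j) (by simpa using hij) ?_
        intro u
        match u with
        | none => simp [SimpleGraph.irrefl]
        | some k =>
          constructor
          · rintro ⟨-, hcol⟩
            simpa using hblock k hcol
          · rintro (h|h) <;> injection h with h <;> subst h
            · exact ⟨adj_ns _, rfl⟩
            · exact ⟨adj_ns _, heq.symm⟩
      rcases ho none (φ' i) with h|h
      · rw [hcard] at h; exact absurd h (by norm_num)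
      · rw [hcard] at h; exact absurd h (by norm_num)
  -- φ is injective, contradiction with 7 vertices and 6 colors
  have hφinj : Function.Injective φ := by
    intro u v huv
    match u, v with
    | none, none => rfl
    | none, some j => exact absurd huv.symm (h0 j)
    | some i, none => exact absurd huv (h0 i)
    | some i, some j => exact congrArg some (hinj huv)
  have := Fintype.card_le_of_injective φ hφinj
  simp at this

/-- The graph `G_7 = K_1 + P_6` has strong odd chromatic number 7. -/
theorem strongOddChromaticNumber_K1_join_P6 :
    (SimpleGraph.pathGraph 6).addUniversal.strongOddChromaticNumber = 7 := by
  have h7 : 7 ∈ {k | ∃ φ : Option (Fin 6) → Fin k, G6.IsStrongOddColoring φ} := by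
    refine ⟨fun o => o.elim (6 : Fin 7) Fin.castSucc, ?_⟩
    have hinj : Function.Injective (fun o : Option (Fin 6) => o.elim (6 : Fin 7) Fin.castSucc) := by
      intro a b hab
      match a, b with
      | none, none => rfl
      | none, some j => exact absurd (congrArg Fin.val hab) (by simpa using j.isLt.ne')
      | some i, none => exact absurd (congrArg Fin.val hab) (by simpa using i.isLt.ne)
      | some i, some j => exact congrArg some (by simpa [Fin.ext_iff] using congrArg Fin.val hab)
    constructor
    · intro u v h hc
      exact h.ne (hinj hc)
    · intro v c
      have hsub : Subsingleton {u // G6.Adj v u ∧ (fun o : Option (Fin 6) =>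
          o.elim (6 : Fin 7) Fin.castSucc) u = c} := by
        constructor
        rintro ⟨u, -, hu⟩ ⟨w, -, hw⟩
        exact Subtype.ext (hinj (hu.trans hw.symm))
      have hle := Finite.card_le_one_iff_subsingleton.mpr hsub
      interval_cases h : Nat.card {u // G6.Adj v u ∧ (fun o : Option (Fin 6) =>
          o.elim (6 : Fin 7) Fin.castSucc) u = c}
      · exact Or.inl rfl
      · exact Or.inr (by norm_num)
  refine le_antisymm (Nat.sInf_le h7) (le_csInf ⟨7, h7⟩ ?_)
  rintro k ⟨φ, hφ⟩
  by_contra hk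
  push_neg at hk
  have hk6 : k ≤ 6 := by omega
  exact no6 ⟨(Fin.castLE hk6) ∘ φ, comp_inj_strongOdd hφ (Fin.castLE_injective hk6)⟩
end

section
/- For any two finite simple graphs G and H, the Cartesian product satisfies χ_so(G □ H) ≤ χ_so(G) · χ_so(H). -/
lemma isStrongOddColoring_comp {V γ δ : Type*} (G : SimpleGraph V) {φ : V → γ} {f : γ → δ}
    (hf : Function.Injective f) (hφ : G.IsStrongOddColoring φ) :
    G.IsStrongOddColoring (f ∘ φ) := by
  refine ⟨fun u v h he => hφ.1 h (hf he), fun v c => ?_⟩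
  by_cases hc : ∃ c', f c' = c
  · obtain ⟨c', rfl⟩ := hc
    have : Nat.card {u // G.Adj v u ∧ (f ∘ φ) u = f c'} =
        Nat.card {u // G.Adj v u ∧ φ u = c'} :=
      Nat.card_congr (Equiv.subtypeEquivRight fun u => by simp [hf.eq_iff])
    rw [this]; exact hφ.2 v c'
  · left
    have : IsEmpty {u // G.Adj v u ∧ (f ∘ φ) u = c} := ⟨fun ⟨u, _, hu⟩ => hc ⟨φ u, hu⟩⟩
    exact Nat.card_of_isEmpty

lemma exists_strongOddColoring {V : Type*} [Fintype V] (G : SimpleGraph V) :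
    ∃ φ : V → Fin (Fintype.card V), G.IsStrongOddColoring φ := by
  refine ⟨Fintype.equivFin V, fun u v h he => G.ne_of_adj h ((Fintype.equivFin V).injective he),
    fun v c => ?_⟩
  rcases isEmpty_or_nonempty {u // G.Adj v u ∧ (Fintype.equivFin V) u = c} with h | h
  · exact Or.inl Nat.card_of_isEmpty
  · right
    haveI : Unique {u // G.Adj v u ∧ (Fintype.equivFin V) u = c} :=
      ⟨⟨h.some⟩, fun a => Subtype.ext
        ((Fintype.equivFin V).injective (a.2.2.trans h.some.2.2.symm))⟩
    rw [Nat.card_unique]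
    exact odd_one

/-- `χ_so(G □ H) ≤ χ_so(G) · χ_so(H)` for the Cartesian (box) product. -/
theorem strongOddChromaticNumber_boxProd_le {α β : Type*} [Fintype α] [Fintype β]
    (G : SimpleGraph α) (H : SimpleGraph β) :
    (G.boxProd H).strongOddChromaticNumber ≤
      G.strongOddChromaticNumber * H.strongOddChromaticNumber := by
  obtain ⟨φ, hφ⟩ := Nat.sInf_mem (s := {k | ∃ φ : α → Fin k, G.IsStrongOddColoring φ})
    ⟨_, exists_strongOddColoring G⟩
  obtain ⟨ψ, hψ⟩ := Nat.sInf_mem (s := {k | ∃ ψ : β → Fin k, H.IsStrongOddColoring ψ})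
    ⟨_, exists_strongOddColoring H⟩
  have hχ : (G.boxProd H).IsStrongOddColoring (fun p : α × β => (φ p.1, ψ p.2)) := by
    constructor
    · rintro ⟨a, b⟩ ⟨a', b'⟩ h he
      rw [SimpleGraph.boxProd_adj] at h
      simp only [Prod.mk.injEq] at he
      rcases h with ⟨h, rfl⟩ | ⟨h, rfl⟩
      · exact hφ.1 h he.1
      · exact hψ.1 h he.2
    · rintro ⟨a, b⟩ ⟨c1, c2⟩
      by_cases h1 : φ a = c1 <;> by_cases h2 : ψ b = c2
      · left
        have : IsEmpty {u : α × β //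
            (G.boxProd H).Adj (a, b) u ∧ (φ u.1, ψ u.2) = (c1, c2)} := by
          constructor
          rintro ⟨⟨a', b'⟩, hadj, he⟩
          rw [SimpleGraph.boxProd_adj] at hadj
          simp only [Prod.mk.injEq] at he
          rcases hadj with ⟨h, rfl⟩ | ⟨h, rfl⟩
          · exact hφ.1 h (h1.trans he.1.symm)
          · exact hψ.1 h (h2.trans he.2.symm)
        exact Nat.card_of_isEmpty
      · -- φ a = c1, ψ b ≠ c2 : only H-direction neighbors
        have key : ∀ u : α × β,
            ((G.boxProd H).Adj (a, b) u ∧ (φ u.1, ψ u.2) = (c1, c2)) ↔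
            (u.1 = a ∧ H.Adj b u.2 ∧ ψ u.2 = c2) := by
          rintro ⟨a', b'⟩
          rw [SimpleGraph.boxProd_adj]
          constructor
          · rintro ⟨hadj, he⟩
            simp only [Prod.mk.injEq] at he
            rcases hadj with ⟨h, rfl⟩ | ⟨h, rfl⟩
            · exact absurd he.2 h2
            · exact ⟨rfl, h, he.2⟩
          · rintro ⟨rfl, hadj, hc⟩
            exact ⟨Or.inr ⟨hadj, rfl⟩, by simp [h1, hc]⟩
        have hcard : Nat.card {u : α × β //
            (G.boxProd H).Adj (a, b) u ∧ (φ u.1, ψ u.2) = (c1, c2)} =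
            Nat.card {b' // H.Adj b b' ∧ ψ b' = c2} := by
          refine Nat.card_congr ((Equiv.subtypeEquivRight key).trans ?_)
          exact ⟨fun u => ⟨u.1.2, u.2.2⟩, fun b' => ⟨(a, b'.1), rfl, b'.2⟩,
            by rintro ⟨⟨a', b'⟩, rfl, h⟩; rfl, fun b' => rfl⟩
        rw [hcard]; exact hψ.2 b c2
      · -- φ a ≠ c1, ψ b = c2 : only G-direction neighbors
        have key : ∀ u : α × β,
            ((G.boxProd H).Adj (a, b) u ∧ (φ u.1, ψ u.2) = (c1, c2)) ↔
            (u.2 = b ∧ G.Adj a u.1 ∧ φ u.1 = c1) := by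
          rintro ⟨a', b'⟩
          rw [SimpleGraph.boxProd_adj]
          constructor
          · rintro ⟨hadj, he⟩
            simp only [Prod.mk.injEq] at he
            rcases hadj with ⟨h, rfl⟩ | ⟨h, rfl⟩
            · exact ⟨rfl, h, he.1⟩
            · exact absurd he.1 h1
          · rintro ⟨rfl, hadj, hc⟩
            exact ⟨Or.inl ⟨hadj, rfl⟩, by simp [h2, hc]⟩
        have hcard : Nat.card {u : α × β //
            (G.boxProd H).Adj (a, b) u ∧ (φ u.1, ψ u.2) = (c1, c2)} =
            Nat.card {a' // G.Adj a a' ∧ φ a' = c1} := by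
          refine Nat.card_congr ((Equiv.subtypeEquivRight key).trans ?_)
          exact ⟨fun u => ⟨u.1.1, u.2.2⟩, fun a' => ⟨(a'.1, b), rfl, a'.2⟩,
            by rintro ⟨⟨a', b'⟩, rfl, h⟩; rfl, fun a' => rfl⟩
        rw [hcard]; exact hφ.2 a c1
      · left
        have : IsEmpty {u : α × β //
            (G.boxProd H).Adj (a, b) u ∧ (φ u.1, ψ u.2) = (c1, c2)} := by
          constructor
          rintro ⟨⟨a', b'⟩, hadj, he⟩
          rw [SimpleGraph.boxProd_adj] at hadj
          simp only [Prod.mk.injEq] at he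
          rcases hadj with ⟨h, rfl⟩ | ⟨h, rfl⟩
          · exact h2 he.2
          · exact h1 he.1
        exact Nat.card_of_isEmpty
  exact Nat.sInf_le ⟨finProdFinEquiv ∘ fun p : α × β => (φ p.1, ψ p.2),
    isStrongOddColoring_comp _ finProdFinEquiv.injective hχ⟩
end

section
/- For any two finite simple graphs G and H, the direct (tensor) product satisfies χ_so(G × H) ≤ χ_so(G) · χ_so(H). -/
/-- The direct (tensor) product of two simple graphs. -/
def SimpleGraph.directProd {α β : Type*} (G : SimpleGraph α) (H : SimpleGraph β) :
    SimpleGraph (α × β) where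
  Adj x y := G.Adj x.1 y.1 ∧ H.Adj x.2 y.2
  symm := ⟨by rintro x y ⟨h1, h2⟩; exact ⟨h1.symm, h2.symm⟩⟩
  loopless := ⟨by rintro x ⟨h1, -⟩; exact G.irrefl h1⟩

/-- Any injective coloring is a strong odd coloring. -/
lemma isStrongOddColoring_of_injective {V γ : Type*} (G : SimpleGraph V) {φ : V → γ}
    (hφ : Function.Injective φ) : G.IsStrongOddColoring φ := by
  refine ⟨fun u v h he => G.ne_of_adj h (hφ he), fun v c => ?_⟩
  haveI : Subsingleton {u // G.Adj v u ∧ φ u = c} := by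
    constructor
    rintro ⟨x, -, hx⟩ ⟨y, -, hy⟩
    exact Subtype.ext (hφ (hx.trans hy.symm))
  rcases isEmpty_or_nonempty {u // G.Adj v u ∧ φ u = c} with h | h
  · exact Or.inl Nat.card_of_isEmpty
  · haveI : Unique {u // G.Adj v u ∧ φ u = c} :=
      uniqueOfSubsingleton h.some
    exact Or.inr (by rw [Nat.card_unique]; exact odd_one)

/-- The set defining the strong odd chromatic number is nonempty for a finite graph. -/
lemma strongOdd_set_nonempty {V : Type*} [Fintype V] (G : SimpleGraph V) :
    {k | ∃ φ : V → Fin k, G.IsStrongOddColoring φ}.Nonempty :=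
  ⟨Fintype.card V, ⟨Fintype.equivFin V,
    isStrongOddColoring_of_injective G (Fintype.equivFin V).injective⟩⟩

lemma directProd_isStrongOddColoring {α β : Type*} (G : SimpleGraph α) (H : SimpleGraph β)
    {k m : ℕ} {φ : α → Fin k} {ψ : β → Fin m}
    (hφ : G.IsStrongOddColoring φ) (hψ : H.IsStrongOddColoring ψ) :
    (G.directProd H).IsStrongOddColoring
      (fun p => finProdFinEquiv (φ p.1, ψ p.2)) := by
  constructor
  · rintro ⟨a, b⟩ ⟨x, y⟩ ⟨hG, -⟩ he
    exact hφ.1 hG (congrArg Prod.fst (finProdFinEquiv.injective he))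
  · rintro ⟨a, b⟩ c
    set c₁ := (finProdFinEquiv.symm c).1 with hc1
    set c₂ := (finProdFinEquiv.symm c).2 with hc2
    have key : Nat.card {u : α × β // (G.directProd H).Adj (a, b) u ∧
        (fun p : α × β => finProdFinEquiv (φ p.1, ψ p.2)) u = c}
        = Nat.card {x // G.Adj a x ∧ φ x = c₁} * Nat.card {y // H.Adj b y ∧ ψ y = c₂} := by
      rw [← Nat.card_prod]
      apply Nat.card_congr
      refine (Equiv.subtypeEquivRight ?_).trans (Equiv.subtypeProdEquivProd)
      rintro ⟨x, y⟩
      simp only [SimpleGraph.directProd, Equiv.apply_eq_iff_eq_symm_apply,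
        Prod.ext_iff, hc1, hc2]
      tauto
    rw [key]
    rcases hφ.2 a c₁ with h1 | h1
    · exact Or.inl (by rw [h1, zero_mul])
    rcases hψ.2 b c₂ with h2 | h2
    · exact Or.inl (by rw [h2, mul_zero])
    · exact Or.inr (h1.mul h2)

/-- `χ_so(G × H) ≤ χ_so(G) · χ_so(H)` for the direct product. -/
theorem strongOddChromaticNumber_directProd_le {α β : Type*} [Fintype α] [Fintype β]
    (G : SimpleGraph α) (H : SimpleGraph β) :
    (G.directProd H).strongOddChromaticNumber ≤
      G.strongOddChromaticNumber * H.strongOddChromaticNumber := by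
  obtain ⟨φ, hφ⟩ := Nat.sInf_mem (strongOdd_set_nonempty G)
  obtain ⟨ψ, hψ⟩ := Nat.sInf_mem (strongOdd_set_nonempty H)
  exact Nat.sInf_le ⟨fun p => finProdFinEquiv (φ p.1, ψ p.2),
    directProd_isStrongOddColoring G H hφ hψ⟩
end

section
/- For any two finite simple graphs G and H, the lexicographic product satisfies χ_so(G ∘ H) ≤ χ_so(G) · (χ_so(H + K_1) − 1), where H + K_1 is the graph obtained from H by adding one universal vertex. -/
/-- The lexicographic product of two simple graphs. -/
def SimpleGraph.lexProd {α β : Type*} (G : SimpleGraph α) (H : SimpleGraph β) :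
    SimpleGraph (α × β) where
  Adj x y := G.Adj x.1 y.1 ∨ (x.1 = y.1 ∧ H.Adj x.2 y.2)
  symm := by
    constructor
    rintro x y (h | ⟨h1, h2⟩)
    · exact Or.inl h.symm
    · exact Or.inr ⟨h1.symm, h2.symm⟩
  loopless := by constructor; rintro x (h | ⟨-, h⟩); exacts [G.irrefl h, H.irrefl h]

namespace StrongOddAux

open SimpleGraph

lemma comp_strongOdd_s10 {V α γ : Type*} (G : SimpleGraph V) (φ : V → α) (e : α → γ)
    (hφ : G.IsStrongOddColoring φ) (he : ∀ u v : V, e (φ u) = e (φ v) → φ u = φ v) :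
    G.IsStrongOddColoring (fun v => e (φ v)) := by
  constructor
  · intro u v h hc
    exact hφ.1 h (he u v hc)
  · intro v c
    by_cases hex : ∃ u, G.Adj v u ∧ e (φ u) = c
    · obtain ⟨u₀, hu₀, hc₀⟩ := hex
      have key : ∀ u, (G.Adj v u ∧ e (φ u) = c) ↔ (G.Adj v u ∧ φ u = φ u₀) := by
        intro u
        constructor
        · rintro ⟨h1, h2⟩; exact ⟨h1, he u u₀ (h2.trans hc₀.symm)⟩
        · rintro ⟨h1, h2⟩; exact ⟨h1, by rw [h2, hc₀]⟩
      rw [Nat.card_congr (Equiv.subtypeEquivRight key)]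
      exact hφ.2 v (φ u₀)
    · left
      have : IsEmpty {u // G.Adj v u ∧ e (φ u) = c} := by
        constructor; rintro ⟨u, hu⟩; exact hex ⟨u, hu⟩
      exact Nat.card_of_isEmpty

lemma exists_strongOdd {V : Type*} [Fintype V] (G : SimpleGraph V) :
    ∃ φ : V → Fin G.strongOddChromaticNumber, G.IsStrongOddColoring φ := by
  have hne : ∃ k, k ∈ {k | ∃ φ : V → Fin k, G.IsStrongOddColoring φ} := by
    classical
    refine ⟨Fintype.card V, (Fintype.equivFin V : V → Fin (Fintype.card V)), ?_, ?_⟩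
    · intro u v h hc
      exact G.ne_of_adj h ((Fintype.equivFin V).injective hc)
    · intro v c
      have hsub : Subsingleton {u // G.Adj v u ∧ Fintype.equivFin V u = c} := by
        constructor
        rintro ⟨u₁, -, h1⟩ ⟨u₂, -, h2⟩
        exact Subtype.ext ((Fintype.equivFin V).injective (h1.trans h2.symm))
      by_cases hno : Nonempty {u // G.Adj v u ∧ Fintype.equivFin V u = c}
      · right
        rw [Nat.card_unique]
        exact odd_one
      · left
        have : IsEmpty {u // G.Adj v u ∧ Fintype.equivFin V u = c} :=
          not_nonempty_iff.mp hno
        exact Nat.card_of_isEmpty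
  exact Nat.sInf_mem hne

lemma addUniversal_adj_none {β : Type*} (H : SimpleGraph β) (b : β) :
    H.addUniversal.Adj none (some b) :=
  ⟨by simp, Or.inl (Or.inr rfl)⟩

lemma addUniversal_adj_some {β : Type*} (H : SimpleGraph β) (a b : β) :
    H.addUniversal.Adj (some a) (some b) ↔ H.Adj a b := by
  constructor
  · rintro ⟨hne, (⟨x, y, hx, hy, hxy⟩ | h) | (⟨x, y, hx, hy, hxy⟩ | h)⟩
    · obtain rfl := Option.some_injective _ hx
      obtain rfl := Option.some_injective _ hy
      exact hxy
    · simp at h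
    · obtain rfl := Option.some_injective _ hx
      obtain rfl := Option.some_injective _ hy
      exact hxy.symm
    · simp at h
  · intro h
    exact ⟨by simp [H.ne_of_adj h], Or.inl (Or.inl ⟨a, b, rfl, rfl, h⟩)⟩

/-- Fiber equivalence used to reduce a product subtype. -/
def fiberEquiv {α β : Type*} (g : α) (Q : β → Prop) :
    {u : α × β // u.1 = g ∧ Q u.2} ≃ {h // Q h} where
  toFun x := ⟨x.1.2, x.2.2⟩
  invFun y := ⟨(g, y.1), rfl, y.2⟩
  left_inv := by rintro ⟨⟨g', h'⟩, rfl, hq⟩; rfl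
  right_inv := by rintro ⟨h', hq⟩; rfl

lemma exists_shrink {m : ℕ} (hm : 2 ≤ m) (p : Fin m) :
    ∃ s : Fin m → Fin (m - 1), ∀ j₁ j₂ : Fin m, j₁ ≠ p → j₂ ≠ p →
      s j₁ = s j₂ → j₁ = j₂ := by
  refine ⟨fun j => ⟨if j.val < p.val then j.val else j.val - 1, by
      have := j.isLt; have := p.isLt; split_ifs <;> omega⟩, ?_⟩
  intro j₁ j₂ h1 h2 h
  have hv := congrArg Fin.val h
  simp only at hv
  have hv1 : j₁.val ≠ p.val := fun hc => h1 (Fin.ext hc)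
  have hv2 : j₂.val ≠ p.val := fun hc => h2 (Fin.ext hc)
  have b1 := j₁.isLt
  have b2 := j₂.isLt
  apply Fin.ext
  split_ifs at hv <;> omega

end StrongOddAux

/-- `χ_so(G ∘ H) ≤ χ_so(G) · (χ_so(H + K_1) - 1)` for the lexicographic product. -/
theorem strongOddChromaticNumber_lexProd_le {α β : Type*} [Fintype α] [Fintype β]
    (G : SimpleGraph α) (H : SimpleGraph β) :
    (G.lexProd H).strongOddChromaticNumber ≤
      G.strongOddChromaticNumber * (H.addUniversal.strongOddChromaticNumber - 1) := by
  classical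
  obtain ⟨phi, hphi⟩ := StrongOddAux.exists_strongOdd G
  obtain ⟨psi, hpsi⟩ := StrongOddAux.exists_strongOdd H.addUniversal
  apply Nat.sInf_le
  by_cases hβ : IsEmpty β
  · have hE : IsEmpty (α × β) := ⟨fun x => hβ.false x.2⟩
    refine ⟨fun x => (hE.false x).elim, ?_, ?_⟩
    · intro u v h; exact (hE.false u).elim
    · intro v c; exact (hE.false v).elim
  · rw [not_isEmpty_iff] at hβ
    obtain ⟨b₀⟩ := hβ
    have hpb : psi none ≠ psi (some b₀) :=
      hpsi.1 (StrongOddAux.addUniversal_adj_none H b₀)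
    have hm2 : 2 ≤ H.addUniversal.strongOddChromaticNumber := by
      have h1 := (psi none).isLt
      have h2 := (psi (some b₀)).isLt
      have h3 : (psi none).val ≠ (psi (some b₀)).val := fun h => hpb (Fin.ext h)
      omega
    have hns : ∀ h' : β, psi (some h') ≠ psi none :=
      fun h' hc => (hpsi.1 (StrongOddAux.addUniversal_adj_none H h') hc.symm).elim
    obtain ⟨shrink, shrink_inj⟩ := StrongOddAux.exists_shrink hm2 (psi none)
    have hso : (G.lexProd H).IsStrongOddColoring
        (fun x : α × β => (phi x.1, psi (some x.2))) := by
      constructor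
      · rintro ⟨g, h⟩ ⟨g', h'⟩ (hadj | ⟨heq, hadj⟩) hc
        · exact hphi.1 hadj (congrArg Prod.fst hc)
        · cases heq
          exact hpsi.1 ((StrongOddAux.addUniversal_adj_some H h h').mpr hadj)
            (congrArg Prod.snd hc)
      · rintro ⟨g, h⟩ ⟨a, b⟩
        by_cases ha : a = phi g
        · -- only the H-part contributes
          have key : ∀ u : α × β,
              ((G.lexProd H).Adj (g, h) u ∧ (phi u.1, psi (some u.2)) = (a, b)) ↔
              (u.1 = g ∧ (H.Adj h u.2 ∧ psi (some u.2) = b)) := by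
            rintro ⟨g', h'⟩
            rw [Prod.mk.injEq]
            constructor
            · rintro ⟨hadj | ⟨heq, hadj⟩, hc1, hc2⟩
              · exact absurd (ha ▸ hc1 : phi g' = phi g).symm (hphi.1 hadj)
              · exact ⟨heq.symm, hadj, hc2⟩
            · rintro ⟨rfl, hadj, hcol⟩
              exact ⟨Or.inr ⟨rfl, hadj⟩, ha.symm, hcol⟩
          rw [Nat.card_congr ((Equiv.subtypeEquivRight key).trans
            (StrongOddAux.fiberEquiv (β := β) g
              (fun h' => H.Adj h h' ∧ psi (some h') = b)))]
          by_cases hb : b = psi none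
          · left
            have : IsEmpty {h' : β // H.Adj h h' ∧ psi (some h') = b} := by
              constructor; rintro ⟨h', -, hc⟩; exact hns h' (hc.trans hb)
            exact Nat.card_of_isEmpty
          · have e2 : {h' : β // H.Adj h h' ∧ psi (some h') = b} ≃
                {u : Option β // H.addUniversal.Adj (some h) u ∧ psi u = b} :=
              { toFun := fun x =>
                  ⟨some x.1, (StrongOddAux.addUniversal_adj_some H h x.1).mpr x.2.1, x.2.2⟩
                invFun := fun y => match y with
                  | ⟨some h', hy⟩ =>
                      ⟨h', (StrongOddAux.addUniversal_adj_some H h h').mp hy.1, hy.2⟩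
                  | ⟨none, hy⟩ => absurd hy.2.symm hb
                right_inv := fun y => match y with
                  | ⟨some h', hy⟩ => rfl
                  | ⟨none, hy⟩ => absurd hy.2.symm hb
                left_inv := fun x => rfl }
            rw [Nat.card_congr e2]
            exact hpsi.2 (some h) b
        · -- only the G-part contributes
          have key : ∀ u : α × β,
              ((G.lexProd H).Adj (g, h) u ∧ (phi u.1, psi (some u.2)) = (a, b)) ↔
              ((G.Adj g u.1 ∧ phi u.1 = a) ∧ psi (some u.2) = b) := by
            rintro ⟨g', h'⟩
            rw [Prod.mk.injEq]
            constructor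
            · rintro ⟨hadj | ⟨heq, hadj⟩, hc1, hc2⟩
              · exact ⟨⟨hadj, hc1⟩, hc2⟩
              · cases heq; exact absurd hc1.symm ha
            · rintro ⟨⟨hadj, hc1⟩, hc2⟩
              exact ⟨Or.inl hadj, hc1, hc2⟩
          rw [Nat.card_congr ((Equiv.subtypeEquivRight key).trans
            (Equiv.subtypeProdEquivProd (p := fun g' : α => G.Adj g g' ∧ phi g' = a)
              (q := fun h' : β => psi (some h') = b))), Nat.card_prod]
          have hA := hphi.2 g a
          have eB : {h' : β // psi (some h') = b} ≃
              {u : Option β // H.addUniversal.Adj none u ∧ psi u = b} :=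
            { toFun := fun x =>
                ⟨some x.1, StrongOddAux.addUniversal_adj_none H x.1, x.2⟩
              invFun := fun y => match y with
                | ⟨some h', hy⟩ => ⟨h', hy.2⟩
                | ⟨none, hy⟩ => absurd hy.1 (H.addUniversal.loopless.irrefl none)
              right_inv := fun y => match y with
                | ⟨some h', hy⟩ => rfl
                | ⟨none, hy⟩ => absurd hy.1 (H.addUniversal.loopless.irrefl none)
              left_inv := fun x => rfl }
          have hB : Nat.card {h' : β // psi (some h') = b} = 0 ∨
              Odd (Nat.card {h' : β // psi (some h') = b}) := by
            rw [Nat.card_congr eB]; exact hpsi.2 none b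
          rcases hA with hA | hA
          · left; rw [hA, zero_mul]
          · rcases hB with hB | hB
            · left; rw [hB, mul_zero]
            · right; exact hA.mul hB
    refine ⟨fun x => finProdFinEquiv (phi x.1, shrink (psi (some x.2))), ?_⟩
    exact StrongOddAux.comp_strongOdd_s10 (G.lexProd H)
      (fun x : α × β => (phi x.1, psi (some x.2)))
      (fun q => finProdFinEquiv (q.1, shrink q.2)) hso
      (fun u v hc => by
        have h1 := finProdFinEquiv.injective hc
        have h2 := congrArg Prod.fst h1
        have h3 := congrArg Prod.snd h1
        exact Prod.ext h2 (shrink_inj _ _ (hns u.2) (hns v.2) h3))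
end

section
/- For all integers p, q ≥ 2, the Cartesian product of complete graphs satisfies χ_so(K_p □ K_q) = p·q. -/
/-- `χ_so(K_p □ K_q) = p·q` for all `p, q ≥ 2`. -/
theorem strongOddChromaticNumber_boxProd_complete (p q : ℕ) (hp : 2 ≤ p) (hq : 2 ≤ q) :
    ((⊤ : SimpleGraph (Fin p)).boxProd (⊤ : SimpleGraph (Fin q))).strongOddChromaticNumber =
      p * q := by
  set G := (⊤ : SimpleGraph (Fin p)).boxProd (⊤ : SimpleGraph (Fin q)) with hG
  have hmem : p * q ∈ {k | ∃ φ : Fin p × Fin q → Fin k, G.IsStrongOddColoring φ} := by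
    refine ⟨fun x => finProdFinEquiv x, ?_, ?_⟩
    · intro u v hadj h
      exact hadj.ne (finProdFinEquiv.injective h)
    · intro v c
      have hsub : Subsingleton {u // G.Adj v u ∧ finProdFinEquiv u = c} := by
        constructor
        rintro ⟨x, _, hx⟩ ⟨y, _, hy⟩
        exact Subtype.ext (finProdFinEquiv.injective (hx.trans hy.symm))
      have h1 : Nat.card {u // G.Adj v u ∧ finProdFinEquiv u = c} ≤ 1 := by
        rw [Nat.le_one_iff_eq_zero_or_eq_one]
        rcases isEmpty_or_nonempty {u // G.Adj v u ∧ finProdFinEquiv u = c} with he | hne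
        · exact Or.inl Nat.card_of_isEmpty
        · exact Or.inr Nat.card_unique
      interval_cases h : Nat.card {u // G.Adj v u ∧ finProdFinEquiv u = c}
      · exact Or.inl rfl
      · exact Or.inr odd_one
  refine le_antisymm (Nat.sInf_le hmem) (le_csInf ⟨_, hmem⟩ ?_)
  rintro k ⟨φ, hproper, hodd⟩
  have hinj : Function.Injective φ := by
    intro u v huv
    by_contra hne
    have h1 : u.1 ≠ v.1 := by
      intro h
      have h2 : u.2 ≠ v.2 := fun h2 => hne (Prod.ext h h2)
      exact hproper (by simp [hG, SimpleGraph.boxProd_adj, h, h2]) huv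
    have h2 : u.2 ≠ v.2 := by
      intro h
      exact hproper (by simp [hG, SimpleGraph.boxProd_adj, h, h1]) huv
    set w : Fin p × Fin q := (u.1, v.2) with hw
    have hset : {x | G.Adj w x ∧ φ x = φ u} = {u, v} := by
      ext x
      simp only [Set.mem_setOf_eq, Set.mem_insert_iff, Set.mem_singleton_iff]
      constructor
      · rintro ⟨hadj, hc⟩
        rcases (SimpleGraph.boxProd_adj).mp hadj with ⟨ha, hb⟩ | ⟨hb, ha⟩
        · -- w.1 ≠ x.1, w.2 = x.2 : x is in column v.2, show x = v
          right
          by_contra hxv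
          have hx1 : x.1 ≠ v.1 := by
            intro h
            exact hxv (Prod.ext h (hb.symm.trans rfl))
          refine hproper (u := x) (v := v) ?_ (hc.trans huv)
          exact SimpleGraph.boxProd_adj.mpr (Or.inl ⟨by simpa using hx1, hb.symm⟩)
        · -- w.2 ≠ x.2, w.1 = x.1 : x is in row u.1, show x = u
          left
          by_contra hxu
          have hx2 : x.2 ≠ u.2 := by
            intro h
            exact hxu (Prod.ext ha.symm h)
          refine hproper (u := x) (v := u) ?_ hc
          exact SimpleGraph.boxProd_adj.mpr (Or.inr ⟨by simpa using hx2, ha.symm⟩)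
      · rintro (rfl | rfl)
        · exact ⟨SimpleGraph.boxProd_adj.mpr (Or.inr ⟨by simpa using h2.symm, rfl⟩), rfl⟩
        · exact ⟨SimpleGraph.boxProd_adj.mpr (Or.inl ⟨by simpa using h1, rfl⟩), huv.symm⟩
    have hcard : Nat.card {x // G.Adj w x ∧ φ x = φ u} = 2 := by
      have : Nat.card ↥({x | G.Adj w x ∧ φ x = φ u} : Set (Fin p × Fin q)) = 2 := by
        rw [hset, Nat.card_coe_set_eq, Set.ncard_pair hne]
      exact this
    rcases hodd w (φ u) with h | h
    · rw [hcard] at h; exact absurd h (by norm_num)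
    · rw [hcard] at h; exact absurd h (by decide)
  calc p * q = Fintype.card (Fin p × Fin q) := by simp
    _ ≤ Fintype.card (Fin k) := Fintype.card_le_of_injective φ hinj
    _ = k := Fintype.card_fin k
end

section
/- For every integer k ≥ 1, the graph H_1 consisting of the disjoint union of 2k+1 copies of the complete graph K_{2k+1} satisfies χ_so(H_1) = 2k+1 and χ_so of its complement (the complete (2k+1)-partite graph with all parts of size 2k+1) also equals 2k+1. Hence for n = (2k+1)^2 there is a graph of order n with χ_so(H_1) = χ_so(complement of H_1) = √n. -/
/-- The disjoint union of `2k+1` copies of the complete graph `K_{2k+1}`: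
two vertices are adjacent iff they lie in the same copy and are distinct. -/
def disjointUnionCompletes (k : ℕ) :
    SimpleGraph (Fin (2 * k + 1) × Fin (2 * k + 1)) where
  Adj x y := x.1 = y.1 ∧ x.2 ≠ y.2
  symm := ⟨by rintro x y ⟨h1, h2⟩; exact ⟨h1.symm, h2.symm⟩⟩
  loopless := ⟨by rintro x ⟨-, h⟩; exact h rfl⟩

/-- For `H_1 = (2k+1) K_{2k+1}` (a graph on `n = (2k+1)^2` vertices), both `H_1` and its
complement (the complete `(2k+1)`-partite graph with parts of size `2k+1`) have strong odd
chromatic number `2k+1 = √n`. -/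
theorem strongOddChromaticNumber_disjointUnionCompletes (k : ℕ) (hk : 1 ≤ k) :
    (disjointUnionCompletes k).strongOddChromaticNumber = 2 * k + 1 ∧
      (disjointUnionCompletes k)ᶜ.strongOddChromaticNumber = 2 * k + 1 := by
  have hmem1 : (2 * k + 1) ∈
      {m | ∃ φ : Fin (2*k+1) × Fin (2*k+1) → Fin m,
        (disjointUnionCompletes k).IsStrongOddColoring φ} := by
    refine ⟨fun x => x.2, fun u v h => h.2, fun v c => ?_⟩
    by_cases hc : c = v.2
    · left
      subst hc
      have : IsEmpty {u // (disjointUnionCompletes k).Adj v u ∧ u.2 = v.2} :=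
        ⟨fun ⟨u, h⟩ => h.1.2 h.2.symm⟩
      exact Nat.card_of_isEmpty
    · right
      have : Unique {u // (disjointUnionCompletes k).Adj v u ∧ u.2 = c} := by
        refine ⟨⟨⟨(v.1, c), ⟨rfl, fun h => hc h.symm⟩, rfl⟩⟩, ?_⟩
        rintro ⟨u, ⟨h1, -⟩, h2⟩
        apply Subtype.ext
        exact Prod.ext h1.symm h2
      rw [Nat.card_unique]
      exact odd_one
  have hmem2 : (2 * k + 1) ∈
      {m | ∃ φ : Fin (2*k+1) × Fin (2*k+1) → Fin m,
        (disjointUnionCompletes k)ᶜ.IsStrongOddColoring φ} := by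
    have hadj : ∀ v u : Fin (2*k+1) × Fin (2*k+1),
        (disjointUnionCompletes k)ᶜ.Adj v u ↔ v.1 ≠ u.1 := by
      intro v u
      constructor
      · rintro ⟨hne, hna⟩ h1
        by_cases h2 : v.2 = u.2
        · exact hne (Prod.ext h1 h2)
        · exact hna ⟨h1, h2⟩
      · intro h1
        exact ⟨fun h => h1 (congrArg Prod.fst h), fun h => h1 h.1⟩
    refine ⟨fun x => x.1, fun u v h => (hadj u v).mp h, fun v c => ?_⟩
    by_cases hc : c = v.1
    · left
      subst hc
      have : IsEmpty {u // (disjointUnionCompletes k)ᶜ.Adj v u ∧ u.1 = v.1} :=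
        ⟨fun ⟨u, h⟩ => ((hadj v u).mp h.1) h.2.symm⟩
      exact Nat.card_of_isEmpty
    · right
      have e : {u // (disjointUnionCompletes k)ᶜ.Adj v u ∧ u.1 = c} ≃ Fin (2*k+1) :=
        { toFun := fun u => u.1.2
          invFun := fun j => ⟨(c, j), (hadj v (c, j)).mpr (fun h => hc h.symm), rfl⟩
          left_inv := by rintro ⟨u, h1, h2⟩; exact Subtype.ext (Prod.ext h2.symm rfl)
          right_inv := fun j => rfl }
      rw [Nat.card_congr e, Nat.card_eq_fintype_card, Fintype.card_fin]
      exact ⟨k, rfl⟩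
  have hlb1 : ∀ m ∈ {m | ∃ φ : Fin (2*k+1) × Fin (2*k+1) → Fin m,
      (disjointUnionCompletes k).IsStrongOddColoring φ}, 2 * k + 1 ≤ m := by
    rintro m ⟨φ, hp, -⟩
    have hinj : Function.Injective (fun i : Fin (2*k+1) => φ (0, i)) := by
      intro i j hij
      by_contra hne
      exact hp (u := ((0 : Fin (2*k+1)), i)) (v := (0, j)) ⟨rfl, fun h => hne h⟩ hij
    simpa using Fintype.card_le_of_injective _ hinj
  have hlb2 : ∀ m ∈ {m | ∃ φ : Fin (2*k+1) × Fin (2*k+1) → Fin m,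
      (disjointUnionCompletes k)ᶜ.IsStrongOddColoring φ}, 2 * k + 1 ≤ m := by
    rintro m ⟨φ, hp, -⟩
    have hinj : Function.Injective (fun i : Fin (2*k+1) => φ (i, 0)) := by
      intro i j hij
      by_contra hne
      refine hp (u := (i, (0 : Fin (2*k+1)))) (v := (j, 0)) ?_ hij
      exact ⟨fun h => hne (congrArg Prod.fst h), fun h => hne h.1⟩
    simpa using Fintype.card_le_of_injective _ hinj
  constructor
  · exact le_antisymm (Nat.sInf_le hmem1) (le_csInf ⟨_, hmem1⟩ hlb1)
  · exact le_antisymm (Nat.sInf_le hmem2) (le_csInf ⟨_, hmem2⟩ hlb2)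
end

section
/- The Cartesian product C_5 □ C_5 of two 5-cycles satisfies χ_so(C_5 □ C_5) ≤ 5; in particular, χ_so is not multiplicative with respect to the Cartesian product, since χ_so(C_5) = 5 but χ_so(C_5 □ C_5) < 25. -/
instance {α β} (G : SimpleGraph α) (H : SimpleGraph β) [DecidableEq α] [DecidableEq β]
    [DecidableRel G.Adj] [DecidableRel H.Adj] : DecidableRel (G.boxProd H).Adj :=
  fun _ _ => decidable_of_iff _ (SimpleGraph.boxProd_adj).symm

lemma natCard_eq {V α : Type*} [Fintype V] [DecidableEq V] [DecidableEq α]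
    (G : SimpleGraph V) [DecidableRel G.Adj] (φ : V → α) (v : V) (c : α) :
    Nat.card {u // G.Adj v u ∧ φ u = c} =
      (Finset.univ.filter fun u => G.Adj v u ∧ φ u = c).card := by
  rw [Nat.card_eq_fintype_card, Fintype.card_subtype]

lemma boxProper : ∀ ⦃u v : Fin 5 × Fin 5⦄,
    ((SimpleGraph.cycleGraph 5).boxProd (SimpleGraph.cycleGraph 5)).Adj u v →
    (u.1 + 2*u.2 : Fin 5) ≠ v.1 + 2*v.2 := by decide

lemma boxOdd : ∀ (v : Fin 5 × Fin 5) (c : Fin 5),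
    (Finset.univ.filter fun u =>
      ((SimpleGraph.cycleGraph 5).boxProd (SimpleGraph.cycleGraph 5)).Adj v u ∧
      (u.1 + 2*u.2 : Fin 5) = c).card = 0 ∨
    Odd (Finset.univ.filter fun u =>
      ((SimpleGraph.cycleGraph 5).boxProd (SimpleGraph.cycleGraph 5)).Adj v u ∧
      (u.1 + 2*u.2 : Fin 5) = c).card := by decide

lemma c5Proper : ∀ ⦃u v : Fin 5⦄, (SimpleGraph.cycleGraph 5).Adj u v → u ≠ v := by decide

lemma c5Odd : ∀ (v c : Fin 5),
    (Finset.univ.filter fun u => (SimpleGraph.cycleGraph 5).Adj v u ∧ u = c).card = 0 ∨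
    Odd (Finset.univ.filter fun u => (SimpleGraph.cycleGraph 5).Adj v u ∧ u = c).card := by
  decide

lemma key {k : ℕ} {φ : Fin 5 → Fin k}
    (h : (SimpleGraph.cycleGraph 5).IsStrongOddColoring φ)
    {i j : Fin 5} (hij : i ≠ j)
    (hadj : ∃ v, ∀ u, (SimpleGraph.cycleGraph 5).Adj v u ↔ u = i ∨ u = j) : φ i ≠ φ j := by
  obtain ⟨v, hv⟩ := hadj
  intro heq
  have h2 := h.2 v (φ j)
  rw [natCard_eq] at h2
  have hset : (Finset.univ.filter fun u => (SimpleGraph.cycleGraph 5).Adj v u ∧ φ u = φ j)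
      = {i, j} := by
    ext u
    simp only [Finset.mem_filter, Finset.mem_univ, true_and, hv, Finset.mem_insert,
      Finset.mem_singleton]
    constructor
    · rintro ⟨h1, _⟩; exact h1
    · rintro (rfl | rfl)
      · exact ⟨Or.inl rfl, heq⟩
      · exact ⟨Or.inr rfl, rfl⟩
  rw [hset, Finset.card_insert_of_notMem (by simpa using hij), Finset.card_singleton] at h2
  rcases h2 with h2 | h2
  · exact absurd h2 (by norm_num)
  · exact absurd h2 (by decide)

lemma c5_inj {k : ℕ} {φ : Fin 5 → Fin k}
    (h : (SimpleGraph.cycleGraph 5).IsStrongOddColoring φ) : Function.Injective φ := by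
  intro i j heq
  by_contra hne
  have htri : ∀ i j : Fin 5, i ≠ j → (SimpleGraph.cycleGraph 5).Adj i j ∨
      ∃ v, ∀ u, (SimpleGraph.cycleGraph 5).Adj v u ↔ u = i ∨ u = j := by decide
  rcases htri i j hne with hadj | hmid
  · exact h.1 hadj heq
  · exact key h hne hmid heq

/-- `χ_so(C_5 □ C_5) ≤ 5`; in particular, since `χ_so(C_5) = 5`, the strong odd chromatic
number is not multiplicative with respect to the Cartesian product:
`χ_so(C_5 □ C_5) < χ_so(C_5) · χ_so(C_5) = 25`. -/
theorem strongOddChromaticNumber_C5_box_C5 :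
    ((SimpleGraph.cycleGraph 5).boxProd
        (SimpleGraph.cycleGraph 5)).strongOddChromaticNumber ≤ 5 ∧
      (SimpleGraph.cycleGraph 5).strongOddChromaticNumber = 5 ∧
      ((SimpleGraph.cycleGraph 5).boxProd
          (SimpleGraph.cycleGraph 5)).strongOddChromaticNumber <
        (SimpleGraph.cycleGraph 5).strongOddChromaticNumber *
          (SimpleGraph.cycleGraph 5).strongOddChromaticNumber := by
  have hboxmem : 5 ∈ {k | ∃ φ : Fin 5 × Fin 5 → Fin k,
      ((SimpleGraph.cycleGraph 5).boxProd (SimpleGraph.cycleGraph 5)).IsStrongOddColoring φ} := by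
    refine ⟨fun p => p.1 + 2*p.2, boxProper, fun v c => ?_⟩
    rw [natCard_eq]
    exact boxOdd v c
  have hbox : ((SimpleGraph.cycleGraph 5).boxProd
      (SimpleGraph.cycleGraph 5)).strongOddChromaticNumber ≤ 5 := Nat.sInf_le hboxmem
  have hc5mem : 5 ∈ {k | ∃ φ : Fin 5 → Fin k,
      (SimpleGraph.cycleGraph 5).IsStrongOddColoring φ} := by
    refine ⟨fun i => i, c5Proper, fun v c => ?_⟩
    rw [natCard_eq]
    exact c5Odd v c
  have hc5 : (SimpleGraph.cycleGraph 5).strongOddChromaticNumber = 5 := by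
    refine le_antisymm (Nat.sInf_le hc5mem) ?_
    obtain ⟨φ, hφ⟩ := Nat.sInf_mem (⟨5, hc5mem⟩ : Set.Nonempty _)
    have := Fintype.card_le_of_injective φ (c5_inj hφ)
    simpa [SimpleGraph.strongOddChromaticNumber] using this
  exact ⟨hbox, hc5, by rw [hc5]; exact lt_of_le_of_lt hbox (by norm_num)⟩
end
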